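/- arXiv:2411.19705 — 7 statements merged into one kernel-verified Lean document; each statement's English description precedes it below -/
import Mathlib

section
/- Let μ be a finite nonnegative Borel measure on [0,2π), n ≥ 1, and let P be a polynomial of degree n+1 over ℂ such that ∫₀^{2π} P(e^{iθ}) · conj(g(e^{iθ})) dμ(θ) = 0 for every polynomial g with deg g ≤ n and g(0) = 0. Suppose ζ ∈ ℂ with |ζ| = 1 and P(ζ) = 0, and let q be the polynomial of degree n with P(z) = (z−ζ)·q(z). Then for every nonzero polynomial h with deg h ≤ n, ∫₀^{2π} q(e^{iθ}) · conj(h(e^{iθ})) dμ(θ) = conj(h(ζ)) · ∫₀^{2π} q(e^{iθ}) dμ(θ). -/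
/-!
Divide `h` by `z - ζ`: `h = h(ζ) + (z - ζ) r` with `deg r ≤ n - 1`. On the unit circle
`conj (z - ζ) = -(z - ζ) conj (ζ z)`, so
`q(z) conj (h(z)) = conj (h(ζ)) q(z) + P(z) conj (g(z))` with `g = -ζ X r`.
Since `deg g ≤ n` and `g(0) = 0`, the last term integrates to zero by paraorthogonality.
-/

open MeasureTheory Polynomial Real ComplexConjugate

namespace Polynomial

variable {R : Type*} [CommRing R]

theorem eq_C_eval_add_X_sub_C_mul_divByMonic (p : R[X]) (a : R) :
    p = C (p.eval a) + (X - C a) * (p /ₘ (X - C a)) := by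
  rw [← modByMonic_X_sub_C_eq_C_eval, modByMonic_add_div]

theorem natDegree_X_mul_divByMonic_X_sub_C_le (p : R[X]) (a : R) :
    (X * (p /ₘ (X - C a))).natDegree ≤ p.natDegree := by
  nontriviality R
  rcases eq_or_ne (p /ₘ (X - C a)) 0 with h0 | h0
  · simp [h0]
  · rw [Ne, divByMonic_eq_zero_iff (monic_X_sub_C a), not_lt, degree_X_sub_C] at h0
    have hp : 1 ≤ p.natDegree := le_natDegree_of_coe_le_degree h0
    rw [natDegree_X_mul (by simpa [divByMonic_eq_zero_iff (monic_X_sub_C a)]),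
      natDegree_divByMonic _ (monic_X_sub_C a), natDegree_X_sub_C]
    omega

end Polynomial

theorem Complex.mul_conj_sub_mul_of_norm_eq_one {z ζ : ℂ} (hz : ‖z‖ = 1) (hζ : ‖ζ‖ = 1)
    (a b : ℂ) : a * conj ((z - ζ) * b) = (z - ζ) * a * conj (-ζ * (z * b)) := by
  have hz0 : z ≠ 0 := norm_ne_zero_iff.mp (by simp [hz])
  have hζ0 : ζ ≠ 0 := norm_ne_zero_iff.mp (by simp [hζ])
  simp only [map_mul, map_sub, map_neg, ← Complex.inv_eq_conj hz, ← Complex.inv_eq_conj hζ]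
  field_simp
  ring

theorem Polynomial.eval_mul_conj_eval_eq_of_norm_eq_one {z ζ : ℂ} (hz : ‖z‖ = 1) (hζ : ‖ζ‖ = 1)
    (q h : ℂ[X]) :
    q.eval z * conj (h.eval z) = conj (h.eval ζ) * q.eval z +
      ((X - C ζ) * q).eval z * conj ((C (-ζ) * (X * (h /ₘ (X - C ζ)))).eval z) := by
  conv_lhs => rw [h.eq_C_eval_add_X_sub_C_mul_divByMonic ζ]
  simp only [eval_add, eval_mul, eval_sub, eval_X, eval_C, map_add, mul_add]
  rw [Complex.mul_conj_sub_mul_of_norm_eq_one hz hζ]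
  ring

theorem popuc_zero_property_general
    (μ : Measure ℝ) [IsFiniteMeasure μ] (n : ℕ)
    (P : Polynomial ℂ)
    (hpara : ∀ g : Polynomial ℂ, g.natDegree ≤ n → g.eval 0 = 0 →
      ∫ θ in Set.Ico 0 (2 * π),
        P.eval (Complex.exp (θ * Complex.I)) *
          (starRingEnd ℂ) (g.eval (Complex.exp (θ * Complex.I))) ∂μ = 0)
    (ζ : ℂ) (hζ : ‖ζ‖ = 1)
    (q : Polynomial ℂ) (hq : P = (X - C ζ) * q)
    (h : Polynomial ℂ) (hdeg : h.natDegree ≤ n) :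
    ∫ θ in Set.Ico 0 (2 * π),
      q.eval (Complex.exp (θ * Complex.I)) *
        (starRingEnd ℂ) (h.eval (Complex.exp (θ * Complex.I))) ∂μ
      = (starRingEnd ℂ) (h.eval ζ) *
        ∫ θ in Set.Ico 0 (2 * π), q.eval (Complex.exp (θ * Complex.I)) ∂μ := by
  set g := C (-ζ) * (X * (h /ₘ (X - C ζ)))
  have hg_deg : g.natDegree ≤ n :=
    calc g.natDegree ≤ (X * (h /ₘ (X - C ζ))).natDegree := natDegree_C_mul_le _ _
      _ ≤ h.natDegree := h.natDegree_X_mul_divByMonic_X_sub_C_le ζ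
      _ ≤ n := hdeg
  have hg_zero : g.eval 0 = 0 := by simp [g]
  subst hq
  simp_rw [q.eval_mul_conj_eval_eq_of_norm_eq_one (Complex.norm_exp_ofReal_mul_I _) hζ h]
  rw [integral_add, hpara g hg_deg hg_zero, add_zero, integral_const_mul]
  all_goals exact (Continuous.integrableOn_Icc (by fun_prop)).mono_set Set.Ico_subset_Icc_self

/-- If `P` of degree `n+1` satisfies the paraorthogonality relations and `ζ` is a zero
of `P` on the unit circle, with `P(z) = (z - ζ) q(z)`, then
`∫ q(e^{iθ}) conj(h(e^{iθ})) dμ = conj(h(ζ)) ∫ q(e^{iθ}) dμ` for every nonzero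
polynomial `h` of degree at most `n`. -/
theorem popuc_zero_property
    (μ : Measure ℝ) [IsFiniteMeasure μ] (n : ℕ) (hn : 1 ≤ n)
    (P : Polynomial ℂ) (hPdeg : P.natDegree = n + 1)
    (hpara : ∀ g : Polynomial ℂ, g.natDegree ≤ n → g.eval 0 = 0 →
      ∫ θ in Set.Ico 0 (2 * π),
        P.eval (Complex.exp (θ * Complex.I)) *
          (starRingEnd ℂ) (g.eval (Complex.exp (θ * Complex.I))) ∂μ = 0)
    (ζ : ℂ) (hζ : ‖ζ‖ = 1) (hPζ : P.eval ζ = 0)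
    (q : Polynomial ℂ) (hq : P = (X - C ζ) * q) (hqdeg : q.natDegree = n)
    (h : Polynomial ℂ) (hne : h ≠ 0) (hdeg : h.natDegree ≤ n) :
    ∫ θ in Set.Ico 0 (2 * π),
      q.eval (Complex.exp (θ * Complex.I)) *
        (starRingEnd ℂ) (h.eval (Complex.exp (θ * Complex.I))) ∂μ
      = (starRingEnd ℂ) (h.eval ζ) *
        ∫ θ in Set.Ico 0 (2 * π), q.eval (Complex.exp (θ * Complex.I)) ∂μ :=
  popuc_zero_property_general μ n P hpara ζ hζ q hq h hdeg
end

section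
/- Let n ≥ 2 and let φ_1,…,φ_n, θ ∈ ℝ be such that e^{iθ} ≠ e^{iφ_k} for k = 1,…,n. Then, as an identity of complex numbers, Σ_{k=1}^{n−2} cot((φ_k−θ)/2) + (1/2)·cot((φ_{n−1}−θ)/2) + (1/2)·cot((φ_n−θ)/2) = −i·(1 − Σ_{k=1}^{n} e^{−iθ}/(e^{−iθ} − e^{−iφ_k}) + Σ_{k=1}^{n−2} e^{iθ}/(e^{iθ} − e^{iφ_k})). In particular the right-hand side is real. -/
/-!
Write `u = e^{iθ}`, `v = e^{iφ}`, `A = e^{-iθ}/(e^{-iθ} - e^{-iφ}) = v/(v - u)` and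
`B = u/(u - v)`. The half-angle formula `cot z = i(e^{2iz} + 1)/(e^{2iz} - 1)` gives
`cot((φ - θ)/2) = -i(B - A)` for all `θ, φ`, while `A + B = 1` as soon as `u ≠ v`.
Summing, the first `n - 2` cotangents give `-i Σ (B_k - A_k)`, and each of the two halved
ones gives `-i(B - A)/2 = -i(1/2 - A)`, which together supply the constant `1`.
-/

open Complex

theorem inv_div_inv_sub_inv {K : Type*} [Field K] {u v : K} (hu : u ≠ 0) (hv : v ≠ 0) :
    u⁻¹ / (u⁻¹ - v⁻¹) = v / (v - u) := by
  rw [inv_sub_inv hu hv, div_div_eq_mul_div, inv_mul_eq_div, mul_div_cancel_left₀ _ hu]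

theorem div_sub_add_div_sub {K : Type*} [Field K] {u v : K} (h : u ≠ v) :
    u / (u - v) + v / (v - u) = 1 := by
  rw [← neg_sub v u, div_neg, neg_add_eq_sub, ← sub_div, div_self (sub_ne_zero.2 h.symm)]

namespace Complex

theorem exp_neg_ofReal_mul_I (x : ℝ) : exp (-x * I) = (exp (x * I))⁻¹ := by
  rw [neg_mul, exp_neg]

theorem cot_half_sub_eq (θ φ : ℝ) :
    (Real.cot ((φ - θ) / 2) : ℂ) =
      -I * (exp (θ * I) / (exp (θ * I) - exp (φ * I))
        - exp (-θ * I) / (exp (-θ * I) - exp (-φ * I))) := by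
  have hexp : exp (2 * I * ((φ - θ) / 2 : ℝ)) = exp (φ * I) / exp (θ * I) := by
    rw [← exp_sub]; push_cast; ring_nf
  rw [ofReal_cot, cot_eq_exp_ratio, hexp, exp_neg_ofReal_mul_I, exp_neg_ofReal_mul_I,
    inv_div_inv_sub_inv (exp_ne_zero _) (exp_ne_zero _)]
  field_simp
  rw [← neg_sub (exp (I * θ)), div_neg, I_sq]
  ring

theorem exp_neg_div_add_exp_div {θ φ : ℝ} (h : exp (θ * I) ≠ exp (φ * I)) :
    exp (-θ * I) / (exp (-θ * I) - exp (-φ * I)) + exp (θ * I) / (exp (θ * I) - exp (φ * I))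
      = 1 := by
  rw [exp_neg_ofReal_mul_I, exp_neg_ofReal_mul_I,
    inv_div_inv_sub_inv (exp_ne_zero _) (exp_ne_zero _), add_comm, div_sub_add_div_sub h]

end Complex

/-- The cotangent identity
`Σ_{k=1}^{n−2} cot((φ_k−θ)/2) + (1/2) cot((φ_{n−1}−θ)/2) + (1/2) cot((φ_n−θ)/2)
  = −i (1 − Σ_{k=1}^{n} e^{−iθ}/(e^{−iθ} − e^{−iφ_k})
        + Σ_{k=1}^{n−2} e^{iθ}/(e^{iθ} − e^{iφ_k}))`;
in particular the right-hand side is real. -/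
theorem S_function_identity (n : ℕ) (hn : 2 ≤ n) (φ : ℕ → ℝ) (θ : ℝ)
    (hne : ∀ k ∈ Finset.Icc 1 n,
      Complex.exp (θ * Complex.I) ≠ Complex.exp (φ k * Complex.I)) :
    (↑((∑ k ∈ Finset.Icc 1 (n - 2), Real.cot ((φ k - θ) / 2)) +
        (1 / 2) * Real.cot ((φ (n - 1) - θ) / 2) +
        (1 / 2) * Real.cot ((φ n - θ) / 2)) : ℂ) =
      -Complex.I * (1 -
        (∑ k ∈ Finset.Icc 1 n,
          Complex.exp (-θ * Complex.I) /
            (Complex.exp (-θ * Complex.I) - Complex.exp (-φ k * Complex.I))) +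
        ∑ k ∈ Finset.Icc 1 (n - 2),
          Complex.exp (θ * Complex.I) /
            (Complex.exp (θ * Complex.I) - Complex.exp (φ k * Complex.I))) := by
  obtain ⟨m, rfl⟩ : ∃ m, n = m + 2 := ⟨n - 2, by omega⟩
  set A : ℕ → ℂ := fun k => exp (-θ * I) / (exp (-θ * I) - exp (-φ k * I))
  set B : ℕ → ℂ := fun k => exp (θ * I) / (exp (θ * I) - exp (φ k * I))
  have hcot (k : ℕ) : (Real.cot ((φ k - θ) / 2) : ℂ) = -I * (B k - A k) :=
    cot_half_sub_eq θ (φ k)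
  have hAB₁ : A (m + 1) + B (m + 1) = 1 :=
    exp_neg_div_add_exp_div (hne (m + 1) (Finset.mem_Icc.2 (by omega)))
  have hAB₂ : A (m + 2) + B (m + 2) = 1 :=
    exp_neg_div_add_exp_div (hne (m + 2) (Finset.mem_Icc.2 (by omega)))
  have hsplit : ∑ k ∈ Finset.Icc 1 (m + 2), A k
      = ∑ k ∈ Finset.Icc 1 m, A k + A (m + 1) + A (m + 2) := by
    rw [Finset.sum_Icc_succ_top (by omega), Finset.sum_Icc_succ_top (by omega)]
  rw [Nat.add_sub_cancel, show m + 2 - 1 = m + 1 from rfl, hsplit]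
  simp only [ofReal_add, ofReal_mul, ofReal_sum, ofReal_div, ofReal_one, ofReal_ofNat, hcot]
  rw [← Finset.mul_sum, Finset.sum_sub_distrib]
  linear_combination (-I / 2) * hAB₁ + (-I / 2) * hAB₂
end

section
/- (Theorem, discrete measure, monotonicity.) Under the stated discrete paraorthogonality setup with fixed zero e^{iθ₀}, if at some t ∈ I one has W_j(t) ≥ 0 for all j = 0,…,N and W_j(t) > 0 for at least one j, then φ_n′(t) > 0; that is, the zero ζ(t) = e^{iφ_n(t)} moves strictly counterclockwise along the unit circle as t increases. -/
/-!
Put `ζ = φ_n` and `Π_j = ∏_{k ≤ n-2} |e^{iω_j} - e^{iφ_k}|²` (`prodChordSq`). Testing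
paraorthogonality against `z ∏_{k ≤ n-2} (z - e^{iφ_k})` shows that on the whole interval
`F = Σ_j γ_j Π_j sin((ζ - ω_j)/2) sin((θ₀ - ω_j)/2) = 0`: on the unit circle `|z - e^{iφ}|²` is real
and `(z - e^{iθ₀}) (z - e^{iζ}) z̄` is a real multiple of the phase `e^{i(θ₀+ζ)/2}`, which does not
depend on `j`. In `F' = 0` the terms in `φ_k'`, `k ≤ n - 2`, drop out by the same argument applied to
`z (z + e^{iφ_k}) ∏_{l ≠ k} (z - e^{iφ_l})`, as `(z - e^{iφ_k}) conj (z + e^{iφ_k})` is purely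
imaginary. The terms in `γ_j'` and `ω_j'` assemble into `W_j`, and evaluating the coefficient of
`ζ'` with `F = 0` and `sin (a - b) cos a sin b + sin² b = cos (a - b) sin a sin b` leaves
`ζ' Σ_j γ_j Π_j sin²((θ₀ - ω_j)/2) = 4 Σ_j Π_j (sin((ζ - ω_j)/2) sin((θ₀ - ω_j)/2))² W_j`.
-/

open Polynomial Real Finset Filter Topology
open Complex (I)
open scoped Complex ComplexConjugate

theorem conj_exp_ofReal_mul_I (x : ℝ) : conj (cexp (x * I)) = cos x - sin x * I := by
  rw [Complex.exp_ofReal_mul_I, map_add, map_mul, Complex.conj_ofReal, Complex.conj_ofReal,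
    Complex.conj_I, mul_neg, ← sub_eq_add_neg]

theorem ofReal_sin_sq_add_cos_sq (x : ℝ) : (sin x : ℂ) ^ 2 + (cos x : ℂ) ^ 2 = 1 := by
  exact_mod_cast sin_sq_add_cos_sq x

theorem exp_mul_I_sub_exp_mul_I (x y : ℝ) :
    cexp (x * I) - cexp (y * I) = 2 * I * sin ((x - y) / 2) * cexp ((x + y) / 2 * I) := by
  have hx : (x : ℂ) * I = (x + y) / 2 * I + ((x - y) / 2 : ℝ) * I := by push_cast; ring
  have hy : (y : ℂ) * I = (x + y) / 2 * I + (-((x - y) / 2) : ℝ) * I := by push_cast; ring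
  rw [hx, hy, Complex.exp_add, Complex.exp_add, Complex.exp_ofReal_mul_I, Complex.exp_ofReal_mul_I,
    cos_neg, sin_neg]
  push_cast
  ring

theorem sin_half_sub_ne_zero_of_exp_mul_I_ne {x y : ℝ} (h : cexp (x * I) ≠ cexp (y * I)) :
    sin ((x - y) / 2) ≠ 0 := by
  intro h0
  rw [← sub_ne_zero, exp_mul_I_sub_exp_mul_I, h0] at h
  simp at h

theorem exp_mul_I_sub_exp_mul_I_mul_conj (w x : ℝ) :
    (cexp (w * I) - cexp (x * I)) * conj (cexp (w * I) - cexp (x * I)) =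
      ((2 - 2 * cos (x - w) : ℝ) : ℂ) := by
  rw [map_sub, conj_exp_ofReal_mul_I, conj_exp_ofReal_mul_I, Complex.exp_ofReal_mul_I,
    Complex.exp_ofReal_mul_I, cos_sub]
  simp only [Complex.ofReal_sub, Complex.ofReal_mul, Complex.ofReal_add, Complex.ofReal_ofNat]
  linear_combination (-((sin w : ℂ) - sin x) ^ 2) * Complex.I_sq +
    ofReal_sin_sq_add_cos_sq w + ofReal_sin_sq_add_cos_sq x

theorem exp_mul_I_sub_exp_mul_I_mul_conj_add (w x : ℝ) :
    (cexp (w * I) - cexp (x * I)) * conj (cexp (w * I) + cexp (x * I)) =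
      ((-2 * sin (x - w) : ℝ) : ℂ) * I := by
  rw [map_add, conj_exp_ofReal_mul_I, conj_exp_ofReal_mul_I, Complex.exp_ofReal_mul_I,
    Complex.exp_ofReal_mul_I, sin_sub]
  simp only [Complex.ofReal_sub, Complex.ofReal_mul, Complex.ofReal_neg, Complex.ofReal_ofNat]
  linear_combination (-((sin w : ℂ) ^ 2 - (sin x) ^ 2)) * Complex.I_sq +
    ofReal_sin_sq_add_cos_sq w - ofReal_sin_sq_add_cos_sq x

theorem exp_mul_I_sub_mul_exp_mul_I_sub_mul_conj (w x y : ℝ) :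
    (cexp (w * I) - cexp (x * I)) * (cexp (w * I) - cexp (y * I)) * conj (cexp (w * I)) =
      ((-4 * (sin ((x - w) / 2) * sin ((y - w) / 2)) : ℝ) : ℂ) *
        cexp ((x + y) / 2 * I) := by
  have hE : cexp ((w + x) / 2 * I) * cexp ((w + y) / 2 * I) * conj (cexp (w * I)) =
      cexp ((x + y) / 2 * I) := by
    rw [← Complex.exp_conj, ← Complex.exp_add, ← Complex.exp_add]
    congr 1
    simp only [map_mul, Complex.conj_ofReal, Complex.conj_I]
    ring
  rw [exp_mul_I_sub_exp_mul_I w x, exp_mul_I_sub_exp_mul_I w y, ← neg_sub x, ← neg_sub y,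
    neg_div, neg_div, sin_neg, sin_neg]
  simp only [Complex.ofReal_mul, Complex.ofReal_neg, Complex.ofReal_ofNat]
  linear_combination (4 * (sin ((x - w) / 2) : ℂ) * sin ((y - w) / 2)) *
    (cexp ((w + x) / 2 * I) * cexp ((w + y) / 2 * I) * conj (cexp (w * I)) * Complex.I_sq - hE)

noncomputable def prodChordSq {κ : Type*} (s : Finset κ) (φ : κ → ℝ) (w : ℝ) : ℝ :=
  ∏ k ∈ s, (2 - 2 * cos (φ k - w))

noncomputable def sinHalfProd (ζ θ₀ w : ℝ) : ℝ :=
  sin ((ζ - w) / 2) * sin ((θ₀ - w) / 2)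

theorem two_sub_two_mul_cos_eq_four_mul_sin_sq (x : ℝ) : 2 - 2 * cos x = 4 * sin (x / 2) ^ 2 := by
  rw [sin_sq_eq_half_sub, show 2 * (x / 2) = x by ring]
  ring

theorem prodChordSq_pos {κ : Type*} {s : Finset κ} {φ : κ → ℝ} {w : ℝ}
    (h : ∀ k ∈ s, sin ((φ k - w) / 2) ≠ 0) : 0 < prodChordSq s φ w :=
  prod_pos fun k hk => by
    have := h k hk
    rw [two_sub_two_mul_cos_eq_four_mul_sin_sq]
    positivity

theorem prod_exp_mul_I_sub_exp_mul_I_mul_conj {κ : Type*} (s : Finset κ) (φ : κ → ℝ) (w : ℝ) :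
    (∏ k ∈ s, (cexp (w * I) - cexp (φ k * I))) * conj (∏ k ∈ s, (cexp (w * I) - cexp (φ k * I))) =
      prodChordSq s φ w := by
  rw [map_prod, ← prod_mul_distrib, prodChordSq, Complex.ofReal_prod]
  exact prod_congr rfl fun k _ => exp_mul_I_sub_exp_mul_I_mul_conj w (φ k)

section Paraorthogonality

variable {ι κ : Type*} {J : Finset ι} {d : ℕ} {γ ω : ι → ℝ} {φ : κ → ℝ} {ζ θ₀ : ℝ} {P : ℂ → ℂ}

theorem sum_mul_prodChordSq_mul_sinHalfProd_eq_zero_of_paraorth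
    (hpara : ∀ g : ℂ[X], g.natDegree ≤ d → g.eval 0 = 0 →
      ∑ j ∈ J, (γ j : ℂ) * P (cexp (ω j * I)) * conj (g.eval (cexp (ω j * I))) = 0)
    {s : Finset κ} {q : ℂ → ℂ} {h : ℂ[X]} {r : ι → ℝ} {c : ℂ} (hc : c ≠ 0)
    (hP : ∀ z, P z =
      (∏ k ∈ s, (z - cexp (φ k * I))) * q z * ((z - cexp (θ₀ * I)) * (z - cexp (ζ * I))))
    (hdeg : 1 + h.natDegree + s.card ≤ d)
    (hqh : ∀ j ∈ J, q (cexp (ω j * I)) * conj (h.eval (cexp (ω j * I))) = r j * c) :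
    ∑ j ∈ J, γ j * prodChordSq s φ (ω j) * r j * sinHalfProd ζ θ₀ (ω j) = 0 := by
  have hg : (X * h * ∏ k ∈ s, (X - C (cexp (φ k * I)))).natDegree ≤ d := by
    refine natDegree_mul_le.trans (le_trans ?_ hdeg)
    rw [natDegree_finsetProd_X_sub_C_eq_card]
    gcongr
    exact natDegree_mul_le.trans (by gcongr; exact natDegree_X_le)
  have hsum := hpara _ hg (by simp)
  have hterm : ∀ j ∈ J, (γ j : ℂ) * P (cexp (ω j * I)) *
      conj ((X * h * ∏ k ∈ s, (X - C (cexp (φ k * I)))).eval (cexp (ω j * I))) =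
      ((γ j * prodChordSq s φ (ω j) * r j * sinHalfProd ζ θ₀ (ω j) : ℝ) : ℂ) *
        (-4 * c * cexp ((θ₀ + ζ) / 2 * I)) := by
    intro j hj
    set z := cexp (ω j * I)
    rw [hP]
    simp only [eval_mul, eval_X, eval_prod, eval_sub, eval_C, map_mul]
    calc _ = (γ j : ℂ) * ((∏ k ∈ s, (z - cexp (φ k * I))) * conj (∏ k ∈ s, (z - cexp (φ k * I)))) *
          (q z * conj (h.eval z)) * ((z - cexp (θ₀ * I)) * (z - cexp (ζ * I)) * conj z) := by ring
      _ = _ := by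
        rw [prod_exp_mul_I_sub_exp_mul_I_mul_conj, hqh j hj, exp_mul_I_sub_mul_exp_mul_I_sub_mul_conj,
          sinHalfProd]
        push_cast
        ring
  rw [sum_congr rfl hterm, ← sum_mul, ← Complex.ofReal_sum] at hsum
  exact_mod_cast (mul_eq_zero.mp hsum).resolve_right (by simp [hc, Complex.exp_ne_zero])

theorem sum_mul_prodChordSq_mul_sinHalfProd_eq_zero
    (hpara : ∀ g : ℂ[X], g.natDegree ≤ d → g.eval 0 = 0 →
      ∑ j ∈ J, (γ j : ℂ) * P (cexp (ω j * I)) * conj (g.eval (cexp (ω j * I))) = 0)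
    {s : Finset κ} (hP : ∀ z, P z =
      (∏ k ∈ s, (z - cexp (φ k * I))) * ((z - cexp (θ₀ * I)) * (z - cexp (ζ * I))))
    (hdeg : s.card + 1 ≤ d) :
    ∑ j ∈ J, γ j * prodChordSq s φ (ω j) * sinHalfProd ζ θ₀ (ω j) = 0 := by
  simpa using sum_mul_prodChordSq_mul_sinHalfProd_eq_zero_of_paraorth hpara (q := fun _ => 1)
    (h := 1) (r := fun _ => 1) one_ne_zero (by simpa using hP) (by simpa [add_comm] using hdeg)
    (by simp)

theorem sum_mul_prodChordSq_erase_mul_sin_mul_sinHalfProd_eq_zero [DecidableEq κ]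
    (hpara : ∀ g : ℂ[X], g.natDegree ≤ d → g.eval 0 = 0 →
      ∑ j ∈ J, (γ j : ℂ) * P (cexp (ω j * I)) * conj (g.eval (cexp (ω j * I))) = 0)
    {s : Finset κ} (hP : ∀ z, P z =
      (∏ k ∈ s, (z - cexp (φ k * I))) * ((z - cexp (θ₀ * I)) * (z - cexp (ζ * I))))
    (hdeg : s.card + 1 ≤ d) {k : κ} (hk : k ∈ s) :
    ∑ j ∈ J, γ j * prodChordSq (s.erase k) φ (ω j) * sin (φ k - ω j) *
      sinHalfProd ζ θ₀ (ω j) = 0 :=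
  sum_mul_prodChordSq_mul_sinHalfProd_eq_zero_of_paraorth hpara (q := fun z => z - cexp (φ k * I))
    (h := X + C (cexp (φ k * I))) (c := -2 * I) (by simp)
    (fun z => by rw [hP, ← mul_prod_erase s _ hk]; ring)
    (by rw [natDegree_X_add_C, card_erase_of_mem hk]; have := card_pos.mpr ⟨k, hk⟩; omega)
    (fun j _ => by
      rw [eval_add, eval_X, eval_C, exp_mul_I_sub_exp_mul_I_mul_conj_add]
      push_cast
      ring)

end Paraorthogonality

noncomputable def sCoeff (ζ θ₀ θ : ℝ) : ℝ :=
  sin ((ζ - θ₀) / 2) / (2 * sin ((ζ - θ) / 2) * sin ((θ₀ - θ) / 2))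

noncomputable def cotSum {κ : Type*} (s : Finset κ) (φ : κ → ℝ) (ζ θ₀ θ : ℝ) : ℝ :=
  (∑ k ∈ s, cot ((φ k - θ) / 2)) + 1 / 2 * cot ((θ₀ - θ) / 2) +
    1 / 2 * cot ((ζ - θ) / 2)

section Derivative

variable {ι κ : Type*} [DecidableEq κ]

theorem prodChordSq_mul_cot {s : Finset κ} {φ : κ → ℝ} {w : ℝ} {k : κ} (hk : k ∈ s)
    (hsin : sin ((φ k - w) / 2) ≠ 0) :
    prodChordSq s φ w * cot ((φ k - w) / 2) =
      prodChordSq (s.erase k) φ w * (2 * sin (φ k - w)) := by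
  rw [prodChordSq, ← mul_prod_erase _ _ hk, ← prodChordSq, two_sub_two_mul_cos_eq_four_mul_sin_sq,
    cot_eq_cos_div_sin]
  set x := (φ k - w) / 2
  rw [show φ k - w = 2 * x by ring, sin_two_mul]
  field_simp
  ring

theorem hasDerivAt_prodChordSq {s : Finset κ} {v : κ → ℝ → ℝ} {u : ℝ → ℝ} {v' : κ → ℝ}
    {u' t : ℝ} (hv : ∀ k ∈ s, HasDerivAt (v k) (v' k) t) (hu : HasDerivAt u u' t) :
    HasDerivAt (fun τ => prodChordSq s (fun k => v k τ) (u τ))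
      (∑ k ∈ s, prodChordSq (s.erase k) (fun k => v k t) (u t) *
        (2 * sin (v k t - u t) * (v' k - u'))) t := by
  refine (HasDerivAt.fun_finsetProd fun k hk =>
    (((hv k hk).sub hu).cos.const_mul 2).const_sub 2).congr_deriv ?_
  simp only [prodChordSq, Pi.sub_apply, smul_eq_mul]
  refine sum_congr rfl fun k _ => ?_
  ring

theorem hasDerivAt_sinHalfProd {ζ u : ℝ → ℝ} {ζ' u' θ₀ t : ℝ} (hζ : HasDerivAt ζ ζ' t)
    (hu : HasDerivAt u u' t) :
    HasDerivAt (fun τ => sinHalfProd (ζ τ) θ₀ (u τ))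
      (cos ((ζ t - u t) / 2) * ((ζ' - u') / 2) * sin ((θ₀ - u t) / 2) -
        sin ((ζ t - u t) / 2) * (cos ((θ₀ - u t) / 2) * (u' / 2))) t := by
  refine (((hζ.sub hu).div_const 2).sin.mul ((hu.const_sub θ₀).div_const 2).sin).congr_deriv ?_
  simp only [Pi.sub_apply]
  ring

theorem hasDerivAt_mul_prodChordSq_mul_sinHalfProd {s : Finset κ} {v : κ → ℝ → ℝ}
    {g u ζ : ℝ → ℝ} {v' : κ → ℝ} {g' u' ζ' θ₀ t : ℝ}
    (hv : ∀ k ∈ s, HasDerivAt (v k) (v' k) t) (hg : HasDerivAt g g' t) (hu : HasDerivAt u u' t)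
    (hζ : HasDerivAt ζ ζ' t) (hvu : ∀ k ∈ s, sin ((v k t - u t) / 2) ≠ 0)
    (hζu : sin ((ζ t - u t) / 2) ≠ 0) (hθ₀u : sin ((θ₀ - u t) / 2) ≠ 0)
    (hζθ₀ : sin ((ζ t - θ₀) / 2) ≠ 0) :
    HasDerivAt (fun τ => g τ * prodChordSq s (fun k => v k τ) (u τ) * sinHalfProd (ζ τ) θ₀ (u τ))
      (2 / sin ((ζ t - θ₀) / 2) *
          (prodChordSq s (fun k => v k t) (u t) * sinHalfProd (ζ t) θ₀ (u t) ^ 2 *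
            (sCoeff (ζ t) θ₀ (u t) * g' -
              g t * sCoeff (ζ t) θ₀ (u t) * cotSum s (fun k => v k t) (ζ t) θ₀ (u t) * u')) +
        ∑ k ∈ s, v' k * (2 * (g t * prodChordSq (s.erase k) (fun k => v k t) (u t) *
          sin (v k t - u t) * sinHalfProd (ζ t) θ₀ (u t))) +
        ζ' / 2 * (g t * prodChordSq s (fun k => v k t) (u t) *
          (cos ((ζ t - u t) / 2) * sin ((θ₀ - u t) / 2)))) t := by
  refine ((hg.mul (hasDerivAt_prodChordSq hv hu)).mul (hasDerivAt_sinHalfProd hζ hu)).congr_deriv ?_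
  have hprod : ∑ k ∈ s, prodChordSq (s.erase k) (fun k => v k t) (u t) *
      (2 * sin (v k t - u t) * (v' k - u')) =
      ∑ k ∈ s, v' k * (2 * prodChordSq (s.erase k) (fun k => v k t) (u t) * sin (v k t - u t)) -
        u' * (prodChordSq s (fun k => v k t) (u t) * ∑ k ∈ s, cot ((v k t - u t) / 2)) := by
    rw [mul_sum, mul_sum, ← sum_sub_distrib]
    refine sum_congr rfl fun k hk => ?_
    have hcot := prodChordSq_mul_cot (φ := fun k => v k t) (w := u t) hk (hvu k hk)
    linear_combination u' * hcot
  have hK : ∑ k ∈ s, v' k * (2 * (g t * prodChordSq (s.erase k) (fun k => v k t) (u t) *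
      sin (v k t - u t) * sinHalfProd (ζ t) θ₀ (u t))) = g t * sinHalfProd (ζ t) θ₀ (u t) *
      ∑ k ∈ s, v' k * (2 * prodChordSq (s.erase k) (fun k => v k t) (u t) * sin (v k t - u t)) := by
    rw [mul_sum]
    exact sum_congr rfl fun k _ => by ring
  simp only [Pi.mul_apply]
  rw [hprod, hK, sCoeff, cotSum, sinHalfProd, cot_eq_cos_div_sin, cot_eq_cos_div_sin]
  generalize prodChordSq s (fun k => v k t) (u t) = Q
  generalize ∑ k ∈ s, v' k * (2 * prodChordSq (s.erase k) (fun k => v k t) (u t) *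
    sin (v k t - u t)) = K
  generalize ∑ k ∈ s, cot ((v k t - u t) / 2) = C
  field_simp
  ring

theorem sin_sub_mul_cos_mul_sin_add_sin_sq (a b : ℝ) :
    sin (a - b) * (cos a * sin b) + sin b ^ 2 =
      cos (a - b) * (sin a * sin b) := by
  rw [sin_sub, cos_sub]
  linear_combination -sin b ^ 2 * sin_sq_add_cos_sq a

theorem sin_mul_sum_cos_mul_sin_eq_neg_sum {J : Finset ι} {c w : ι → ℝ} {ζ θ₀ : ℝ}
    (h : ∑ j ∈ J, c j * sinHalfProd ζ θ₀ (w j) = 0) :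
    sin ((ζ - θ₀) / 2) * ∑ j ∈ J, c j * (cos ((ζ - w j) / 2) * sin ((θ₀ - w j) / 2)) =
      -∑ j ∈ J, c j * sin ((θ₀ - w j) / 2) ^ 2 := by
  have hj : ∀ j ∈ J, sin ((ζ - θ₀) / 2) *
      (c j * (cos ((ζ - w j) / 2) * sin ((θ₀ - w j) / 2))) =
      cos ((ζ - θ₀) / 2) * (c j * sinHalfProd ζ θ₀ (w j)) - c j * sin ((θ₀ - w j) / 2) ^ 2 := by
    intro j _
    have h := sin_sub_mul_cos_mul_sin_add_sin_sq ((ζ - w j) / 2) ((θ₀ - w j) / 2)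
    rw [show (ζ - w j) / 2 - (θ₀ - w j) / 2 = (ζ - θ₀) / 2 by ring] at h
    rw [sinHalfProd]
    linear_combination c j * h
  rw [mul_sum, sum_congr rfl hj, sum_sub_distrib, ← mul_sum, h, mul_zero, zero_sub]

theorem pos_of_mul_sum_eq_mul_sum {J : Finset ι} {x c : ℝ} {a b W : ι → ℝ}
    (h : x * ∑ j ∈ J, a j = c * ∑ j ∈ J, b j * W j) (hc : 0 < c) (ha : ∀ j ∈ J, 0 < a j)
    (hb : ∀ j ∈ J, 0 < b j) (hW : ∀ j ∈ J, 0 ≤ W j) (hWpos : ∃ j ∈ J, 0 < W j) : 0 < x := by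
  obtain ⟨j₀, hj₀, hWj₀⟩ := hWpos
  have hbW : 0 < ∑ j ∈ J, b j * W j :=
    sum_pos' (fun j hj => mul_nonneg (hb j hj).le (hW j hj)) ⟨j₀, hj₀, mul_pos (hb j₀ hj₀) hWj₀⟩
  exact pos_of_mul_pos_left (h ▸ mul_pos hc hbW) (sum_pos ha ⟨j₀, hj₀⟩).le

theorem pos_of_eventually_sum_eq_zero {J : Finset ι} {s : Finset κ}
    {g u : ι → ℝ → ℝ} {v : κ → ℝ → ℝ} {ζ : ℝ → ℝ} {g' u' : ι → ℝ} {v' : κ → ℝ} {ζ' θ₀ t : ℝ}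
    {W : ι → ℝ}
    (hF : ∀ᶠ τ in 𝓝 t, ∑ j ∈ J, g j τ * prodChordSq s (fun k => v k τ) (u j τ) *
      sinHalfProd (ζ τ) θ₀ (u j τ) = 0)
    (hT : ∀ k ∈ s, ∑ j ∈ J, g j t * prodChordSq (s.erase k) (fun k => v k t) (u j t) *
      sin (v k t - u j t) * sinHalfProd (ζ t) θ₀ (u j t) = 0)
    (hg : ∀ j ∈ J, HasDerivAt (g j) (g' j) t) (hu : ∀ j ∈ J, HasDerivAt (u j) (u' j) t)
    (hv : ∀ k ∈ s, HasDerivAt (v k) (v' k) t) (hζ : HasDerivAt ζ ζ' t)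
    (hvu : ∀ j ∈ J, ∀ k ∈ s, sin ((v k t - u j t) / 2) ≠ 0)
    (hζu : ∀ j ∈ J, sin ((ζ t - u j t) / 2) ≠ 0)
    (hθ₀u : ∀ j ∈ J, sin ((θ₀ - u j t) / 2) ≠ 0) (hζθ₀ : sin ((ζ t - θ₀) / 2) ≠ 0)
    (hW : ∀ j ∈ J, W j = sCoeff (ζ t) θ₀ (u j t) * g' j -
      g j t * sCoeff (ζ t) θ₀ (u j t) * cotSum s (fun k => v k t) (ζ t) θ₀ (u j t) * u' j)
    (hgpos : ∀ j ∈ J, 0 < g j t) (hWnonneg : ∀ j ∈ J, 0 ≤ W j) (hWpos : ∃ j ∈ J, 0 < W j) :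
    0 < ζ' := by
  have hD := HasDerivAt.fun_sum fun j hj => hasDerivAt_mul_prodChordSq_mul_sinHalfProd hv (hg j hj)
    (hu j hj) hζ (hvu j hj) (hζu j hj) (hθ₀u j hj) hζθ₀
  have hzero := ((EventuallyEq.hasDerivAt_iff hF).mp hD).unique (hasDerivAt_const t 0)
  have hmoving : ∑ j ∈ J, ∑ k ∈ s, v' k * (2 * (g j t *
      prodChordSq (s.erase k) (fun k => v k t) (u j t) * sin (v k t - u j t) *
      sinHalfProd (ζ t) θ₀ (u j t))) = 0 := by
    rw [sum_comm]
    exact sum_eq_zero fun k hk => by rw [← mul_sum, ← mul_sum, hT k hk, mul_zero, mul_zero]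
  have hM := sin_mul_sum_cos_mul_sin_eq_neg_sum (hF.self_of_nhds)
  rw [sum_add_distrib, sum_add_distrib, hmoving, ← mul_sum, ← mul_sum,
    sum_congr rfl fun j hj => by rw [← hW j hj]] at hzero
  have key : ζ' * ∑ j ∈ J, g j t * prodChordSq s (fun k => v k t) (u j t) *
        sin ((θ₀ - u j t) / 2) ^ 2 =
      4 * ∑ j ∈ J, prodChordSq s (fun k => v k t) (u j t) * sinHalfProd (ζ t) θ₀ (u j t) ^ 2 *
        W j := by
    linear_combination (-2 * sin ((ζ t - θ₀) / 2)) * hzero + ζ' * hM +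
      2 * (∑ j ∈ J, prodChordSq s (fun k => v k t) (u j t) * sinHalfProd (ζ t) θ₀ (u j t) ^ 2 *
        W j) * div_mul_cancel₀ 2 hζθ₀
  have hprod : ∀ j ∈ J, 0 < prodChordSq s (fun k => v k t) (u j t) := fun j hj =>
    prodChordSq_pos (hvu j hj)
  refine pos_of_mul_sum_eq_mul_sum key four_pos (fun j hj => ?_) (fun j hj => ?_) hWnonneg hWpos
  · have := hgpos j hj
    have := hprod j hj
    have := hθ₀u j hj
    positivity
  · have := hprod j hj
    have : sinHalfProd (ζ t) θ₀ (u j t) ≠ 0 := mul_ne_zero (hζu j hj) (hθ₀u j hj)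
    positivity

end Derivative

theorem prod_Icc_one_eq_prod_mul {M : Type*} [CommMonoid M] {n : ℕ} (hn : 2 ≤ n) (f : ℕ → M) :
    ∏ k ∈ Icc 1 n, f k = (∏ k ∈ Icc 1 (n - 2), f k) * (f (n - 1) * f n) := by
  obtain ⟨m, rfl⟩ : ∃ m, n = m + 2 := ⟨n - 2, by omega⟩
  rw [prod_Icc_succ_top (by omega), prod_Icc_succ_top (by omega), mul_assoc]
  simp

theorem discrete_popuc_zero_moves_counterclockwise_general
    -- the open interval `I = (a, b)`
    (a b : ℝ)
    -- the masses `γ_j` and mass points `ω_j`, `j = 0, …, N`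
    (N : ℕ) (γ ω : ℕ → ℝ → ℝ)
    (hγpos : ∀ j ≤ N, ∀ t ∈ Set.Ioo a b, 0 < γ j t)
    (hγdiff : ∀ j ≤ N, ∀ t ∈ Set.Ioo a b, DifferentiableAt ℝ (γ j) t)
    (hωdiff : ∀ j ≤ N, ∀ t ∈ Set.Ioo a b, DifferentiableAt ℝ (ω j) t)
    -- the zeros `e^{iφ_k(t)}`, `k = 1, …, n`, of the POPUC `P(·; t)`
    (n : ℕ) (hn : 2 ≤ n) (θ₀ : ℝ) (φ : ℕ → ℝ → ℝ)
    (hφdiff : ∀ k ∈ Finset.Icc 1 n, ∀ t ∈ Set.Ioo a b, DifferentiableAt ℝ (φ k) t)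
    (hfix : ∀ t ∈ Set.Ioo a b, φ (n - 1) t = θ₀)
    (P : ℂ → ℝ → ℂ)
    (hP : ∀ z t, P z t = ∏ k ∈ Finset.Icc 1 n, (z - Complex.exp (φ k t * Complex.I)))
    (hdistinct : ∀ t ∈ Set.Ioo a b, ∀ j ∈ Finset.Icc 1 n, ∀ k ∈ Finset.Icc 1 n, j ≠ k →
      Complex.exp (φ j t * Complex.I) ≠ Complex.exp (φ k t * Complex.I))
    (hsep : ∀ t ∈ Set.Ioo a b, ∀ j ≤ N, ∀ k ∈ Finset.Icc 1 n,
      Complex.exp (ω j t * Complex.I) ≠ Complex.exp (φ k t * Complex.I))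
    -- paraorthogonality with respect to the measure `Σ_j γ_j(t) δ(θ − ω_j(t))`
    (hpara : ∀ t ∈ Set.Ioo a b, ∀ g : Polynomial ℂ,
      g.natDegree ≤ n - 1 → g.eval 0 = 0 →
      ∑ j ∈ Finset.range (N + 1), (γ j t : ℂ) *
        P (Complex.exp (ω j t * Complex.I)) t *
        (starRingEnd ℂ) (g.eval (Complex.exp (ω j t * Complex.I))) = 0)
    -- the functions `s`, `S` and `W_j`
    (s : ℝ → ℝ → ℝ)
    (hs : ∀ θ t, s θ t = Real.sin ((φ n t - θ₀) / 2) /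
      (2 * Real.sin ((φ n t - θ) / 2) * Real.sin ((θ₀ - θ) / 2)))
    (S : ℝ → ℝ → ℝ)
    (hS : ∀ θ t, S θ t = (∑ k ∈ Finset.Icc 1 (n - 2), Real.cot ((φ k t - θ) / 2)) +
      (1 / 2) * Real.cot ((θ₀ - θ) / 2) + (1 / 2) * Real.cot ((φ n t - θ) / 2))
    (W : ℕ → ℝ → ℝ)
    (hW : ∀ j t, W j t = s (ω j t) t * deriv (γ j) t -
      γ j t * s (ω j t) t * S (ω j t) t * deriv (ω j) t)
    -- hypotheses on the sign of the `W_j` at a given `t`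
    (t : ℝ) (ht : t ∈ Set.Ioo a b)
    (hWnonneg : ∀ j ≤ N, 0 ≤ W j t)
    (hWpos : ∃ j ≤ N, 0 < W j t)
    -- conclusion
    : 0 < deriv (φ n) t := by
  have hJ : ∀ {j}, j ∈ Finset.range (N + 1) ↔ j ≤ N := mem_range_succ_iff
  have hsub : Icc 1 (n - 2) ⊆ Icc 1 n := Icc_subset_Icc_right (by omega)
  have hn₁ : n - 1 ∈ Icc 1 n := by simp; omega
  have hn₂ : n ∈ Icc 1 n := by simp; omega
  have hPfac : ∀ τ ∈ Set.Ioo a b, ∀ z, P z τ = (∏ k ∈ Icc 1 (n - 2), (z - cexp (φ k τ * I))) *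
      ((z - cexp (θ₀ * I)) * (z - cexp (φ n τ * I))) := fun τ hτ z => by
    rw [hP, prod_Icc_one_eq_prod_mul hn, hfix τ hτ]
  have hdeg : (Icc 1 (n - 2)).card + 1 ≤ n - 1 := by simp; omega
  have hsin : ∀ j ≤ N, ∀ k ∈ Icc 1 n, sin ((φ k t - ω j t) / 2) ≠ 0 := fun j hj k hk =>
    sin_half_sub_ne_zero_of_exp_mul_I_ne (hsep t ht j hj k hk).symm
  have hsinθ₀ : ∀ j ≤ N, sin ((θ₀ - ω j t) / 2) ≠ 0 := fun j hj => by
    simpa [hfix t ht] using hsin j hj (n - 1) hn₁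
  have hsinζθ₀ : sin ((φ n t - θ₀) / 2) ≠ 0 := by
    simpa [hfix t ht] using
      sin_half_sub_ne_zero_of_exp_mul_I_ne (hdistinct t ht n hn₂ (n - 1) hn₁ (by omega))
  exact pos_of_eventually_sum_eq_zero (J := Finset.range (N + 1)) (W := fun j => W j t)
    (eventually_of_mem (Ioo_mem_nhds ht.1 ht.2) fun τ hτ =>
      sum_mul_prodChordSq_mul_sinHalfProd_eq_zero (P := fun z => P z τ) (hpara τ hτ) (hPfac τ hτ)
        hdeg)
    (fun k hk => sum_mul_prodChordSq_erase_mul_sin_mul_sinHalfProd_eq_zero (P := fun z => P z t)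
      (γ := fun j => γ j t) (ω := fun j => ω j t) (hpara t ht) (hPfac t ht) hdeg hk)
    (fun j hj => (hγdiff j (hJ.mp hj) t ht).hasDerivAt)
    (fun j hj => (hωdiff j (hJ.mp hj) t ht).hasDerivAt)
    (fun k hk => (hφdiff k (hsub hk) t ht).hasDerivAt) (hφdiff n hn₂ t ht).hasDerivAt
    (fun j hj k hk => hsin j (hJ.mp hj) k (hsub hk)) (fun j hj => hsin j (hJ.mp hj) n hn₂)
    (fun j hj => hsinθ₀ j (hJ.mp hj)) hsinζθ₀ (fun j _ => by rw [hW, hs, hS]; rfl)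
    (fun j hj => hγpos j (hJ.mp hj) t ht) (fun j hj => hWnonneg j (hJ.mp hj))
    (hWpos.imp fun j h => ⟨hJ.mpr h.1, h.2⟩)

/-- Theorem (discrete measure, monotonicity): under the discrete paraorthogonality
setup with fixed zero `e^{iθ₀}`, if at some `t ∈ I` one has `W_j(t) ≥ 0` for all `j`
and `W_j(t) > 0` for some `j`, then `φ_n'(t) > 0`, i.e. the zero `ζ(t) = e^{iφ_n(t)}`
moves strictly counterclockwise along the unit circle as `t` increases. -/
theorem discrete_popuc_zero_moves_counterclockwise
    -- the open interval `I = (a, b)`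
    (a b : ℝ) (hab : a < b)
    -- the masses `γ_j` and mass points `ω_j`, `j = 0, …, N`
    (N : ℕ) (γ ω : ℕ → ℝ → ℝ)
    (hγpos : ∀ j ≤ N, ∀ t ∈ Set.Ioo a b, 0 < γ j t)
    (hγdiff : ∀ j ≤ N, ∀ t ∈ Set.Ioo a b, DifferentiableAt ℝ (γ j) t)
    (hωdiff : ∀ j ≤ N, ∀ t ∈ Set.Ioo a b, DifferentiableAt ℝ (ω j) t)
    -- the zeros `e^{iφ_k(t)}`, `k = 1, …, n`, of the POPUC `P(·; t)`
    (n : ℕ) (hn : 2 ≤ n) (θ₀ : ℝ) (φ : ℕ → ℝ → ℝ)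
    (hφdiff : ∀ k ∈ Finset.Icc 1 n, ∀ t ∈ Set.Ioo a b, DifferentiableAt ℝ (φ k) t)
    (hfix : ∀ t ∈ Set.Ioo a b, φ (n - 1) t = θ₀)
    (P : ℂ → ℝ → ℂ)
    (hP : ∀ z t, P z t = ∏ k ∈ Finset.Icc 1 n, (z - Complex.exp (φ k t * Complex.I)))
    (hdistinct : ∀ t ∈ Set.Ioo a b, ∀ j ∈ Finset.Icc 1 n, ∀ k ∈ Finset.Icc 1 n, j ≠ k →
      Complex.exp (φ j t * Complex.I) ≠ Complex.exp (φ k t * Complex.I))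
    (hsep : ∀ t ∈ Set.Ioo a b, ∀ j ≤ N, ∀ k ∈ Finset.Icc 1 n,
      Complex.exp (ω j t * Complex.I) ≠ Complex.exp (φ k t * Complex.I))
    -- paraorthogonality with respect to the measure `Σ_j γ_j(t) δ(θ − ω_j(t))`
    (hpara : ∀ t ∈ Set.Ioo a b, ∀ g : Polynomial ℂ,
      g.natDegree ≤ n - 1 → g.eval 0 = 0 →
      ∑ j ∈ Finset.range (N + 1), (γ j t : ℂ) *
        P (Complex.exp (ω j t * Complex.I)) t *
        (starRingEnd ℂ) (g.eval (Complex.exp (ω j t * Complex.I))) = 0)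
    -- the functions `s`, `S` and `W_j`
    (s : ℝ → ℝ → ℝ)
    (hs : ∀ θ t, s θ t = Real.sin ((φ n t - θ₀) / 2) /
      (2 * Real.sin ((φ n t - θ) / 2) * Real.sin ((θ₀ - θ) / 2)))
    (S : ℝ → ℝ → ℝ)
    (hS : ∀ θ t, S θ t = (∑ k ∈ Finset.Icc 1 (n - 2), Real.cot ((φ k t - θ) / 2)) +
      (1 / 2) * Real.cot ((θ₀ - θ) / 2) + (1 / 2) * Real.cot ((φ n t - θ) / 2))
    (W : ℕ → ℝ → ℝ)
    (hW : ∀ j t, W j t = s (ω j t) t * deriv (γ j) t -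
      γ j t * s (ω j t) t * S (ω j t) t * deriv (ω j) t)
    -- hypotheses on the sign of the `W_j` at a given `t`
    (t : ℝ) (ht : t ∈ Set.Ioo a b)
    (hWnonneg : ∀ j ≤ N, 0 ≤ W j t)
    (hWpos : ∃ j ≤ N, 0 < W j t)
    -- conclusion
    : 0 < deriv (φ n) t :=
  discrete_popuc_zero_moves_counterclockwise_general a b N γ ω hγpos hγdiff hωdiff n hn θ₀ φ hφdiff
    hfix P hP hdistinct hsep hpara s hs S hS W hW t ht hWnonneg hWpos
end

section
/- Under the stated discrete paraorthogonality setup with a conjugate pair of zeros, for every t ∈ I one has the identity φ_n′(t) · Σ_{j=0}^N γ_j(t) · |P(e^{iω_j(t)};t)|² · ( 1/|e^{iω_j(t)} − e^{iφ_n(t)}|² + 1/|e^{iω_j(t)} − e^{−iφ_n(t)}|² ) = 2·sin(φ_n(t)) · Σ_{j=0}^N W̃_j(t) · |P(e^{iω_j(t)};t)|². -/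
/-!
On the unit circle `(w - e^{iψ})(w - e^{-iψ}) w̄ = 2 (cos ω - cos ψ)` for `w = e^{iω}`, so testing
paraorthogonality against `z ∏_{k ≤ n-2} (z - e^{iφ_k})` and against
`z (z + e^{iφ_k}) ∏_{l ≠ k} (z - e^{iφ_l})` yields the real identities
`Σ_j γ_j (cos ω_j - cos ψ) Q_j = 0` and `Σ_j γ_j (cos ω_j - cos ψ) sin (ω_j - φ_k) Q_j^{(k)} = 0`,
where `ψ = φ_n`, `Q_j = ∏_{k ≤ n-2} |e^{iω_j} - e^{iφ_k}|²` and `Q_j^{(k)}` omits the factor `k`.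
The first holds for all `t`; differentiating it, the second kills every `φ_k'` term, and what is
left is `-½ Σ_j W̃_j |P(e^{iω_j})|² = -φ_n' sin φ_n Σ_j γ_j Q_j`. By the first identity the
left-hand side of the theorem is `4 φ_n' sin² φ_n Σ_j γ_j Q_j` as well.
-/

open Polynomial Finset ComplexConjugate Filter Topology
open Complex (exp I normSq)

noncomputable def chordSq (θ ψ : ℝ) : ℝ := 2 - 2 * Real.cos (θ - ψ)

lemma exp_ofReal_mul_I (θ : ℝ) : exp (θ * I) = Real.cos θ + Real.sin θ * I := by
  rw [Complex.exp_mul_I, Complex.ofReal_cos, Complex.ofReal_sin]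

lemma exp_neg_ofReal_mul_I (θ : ℝ) : exp (-θ * I) = Real.cos θ - Real.sin θ * I := by
  rw [← Complex.ofReal_neg, exp_ofReal_mul_I, Real.cos_neg, Real.sin_neg]
  push_cast; ring

lemma conj_exp_ofReal_mul_I_s12 (θ : ℝ) : conj (exp (θ * I)) = exp (-θ * I) := by
  rw [exp_ofReal_mul_I, exp_neg_ofReal_mul_I, map_add, map_mul, Complex.conj_I,
    Complex.conj_ofReal, Complex.conj_ofReal]
  ring

lemma exp_ofReal_mul_I_mul_exp_neg (θ : ℝ) : exp (θ * I) * exp (-θ * I) = 1 := by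
  rw [← Complex.exp_add]; simp

lemma exp_ofReal_mul_I_add_exp_neg (θ : ℝ) : exp (θ * I) + exp (-θ * I) = 2 * Real.cos θ := by
  rw [exp_ofReal_mul_I, exp_neg_ofReal_mul_I]; ring

lemma exp_ofReal_mul_I_sub_exp_neg (θ : ℝ) :
    exp (θ * I) - exp (-θ * I) = 2 * Real.sin θ * I := by
  rw [exp_ofReal_mul_I, exp_neg_ofReal_mul_I]; ring

lemma normSq_exp_mul_I_sub (θ ψ : ℝ) :
    normSq (exp (θ * I) - exp (ψ * I)) = chordSq θ ψ := by
  rw [exp_ofReal_mul_I, exp_ofReal_mul_I, chordSq, Real.cos_sub, Complex.normSq_apply]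
  simp only [Complex.sub_re, Complex.sub_im, Complex.add_re, Complex.add_im, Complex.mul_re,
    Complex.mul_im, Complex.ofReal_re, Complex.ofReal_im, Complex.I_re, Complex.I_im]
  linear_combination Real.sin_sq_add_cos_sq θ + Real.sin_sq_add_cos_sq ψ

lemma sq_norm_exp_mul_I_sub (θ ψ : ℝ) : ‖exp (θ * I) - exp (ψ * I)‖ ^ 2 = chordSq θ ψ := by
  rw [Complex.sq_norm, normSq_exp_mul_I_sub]

lemma chordSq_ne_zero {θ ψ : ℝ} (h : exp (θ * I) ≠ exp (ψ * I)) : chordSq θ ψ ≠ 0 := by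
  rw [← normSq_exp_mul_I_sub]
  exact (Complex.normSq_pos.mpr (sub_ne_zero.mpr h)).ne'

lemma exp_sub_mul_exp_sub_mul_conj (θ ψ : ℝ) :
    (exp (θ * I) - exp (ψ * I)) * (exp (θ * I) - exp (-ψ * I)) * conj (exp (θ * I)) =
      2 * Real.cos θ - 2 * Real.cos ψ := by
  rw [conj_exp_ofReal_mul_I_s12]
  linear_combination (exp (θ * I) - exp (ψ * I) - exp (-ψ * I)) * exp_ofReal_mul_I_mul_exp_neg θ
    + exp (-θ * I) * exp_ofReal_mul_I_mul_exp_neg ψ + exp_ofReal_mul_I_add_exp_neg θ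
    - exp_ofReal_mul_I_add_exp_neg ψ

lemma exp_sub_mul_conj_exp_add (θ ψ : ℝ) :
    (exp (θ * I) - exp (ψ * I)) * conj (exp (θ * I) + exp (ψ * I)) =
      2 * Real.sin (θ - ψ) * I := by
  have hdiff : exp (θ * I) * exp (-ψ * I) = exp ((θ - ψ : ℝ) * I) := by
    rw [← Complex.exp_add]; push_cast; ring_nf
  have hdiff' : exp (ψ * I) * exp (-θ * I) = exp (-(θ - ψ : ℝ) * I) := by
    rw [← Complex.exp_add]; push_cast; ring_nf
  rw [map_add, conj_exp_ofReal_mul_I_s12, conj_exp_ofReal_mul_I_s12]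
  linear_combination exp_ofReal_mul_I_mul_exp_neg θ - exp_ofReal_mul_I_mul_exp_neg ψ + hdiff
    - hdiff' + exp_ofReal_mul_I_sub_exp_neg (θ - ψ)

lemma chordSq_mul_chordSq_neg (θ ψ : ℝ) :
    chordSq θ ψ * chordSq θ (-ψ) = 4 * (Real.cos θ - Real.cos ψ) ^ 2 := by
  rw [chordSq, chordSq, sub_neg_eq_add, Real.cos_sub, Real.cos_add]
  linear_combination (4 * Real.cos ψ ^ 2 - 4) * Real.sin_sq_add_cos_sq θ
    - 4 * Real.sin θ ^ 2 * Real.sin_sq_add_cos_sq ψ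

lemma cos_ne_cos_of_exp_ne {θ ψ : ℝ} (hψ : exp (θ * I) ≠ exp (ψ * I))
    (hnegψ : exp (θ * I) ≠ exp ((-ψ : ℝ) * I)) : Real.cos θ ≠ Real.cos ψ := by
  intro h
  have := chordSq_mul_chordSq_neg θ ψ
  rw [h, sub_self] at this
  simp [chordSq_ne_zero hψ, chordSq_ne_zero hnegψ] at this

lemma chordSq_add_chordSq_neg (θ ψ : ℝ) :
    chordSq θ ψ + chordSq θ (-ψ) = 4 - 4 * Real.cos θ * Real.cos ψ := by
  rw [chordSq, chordSq, sub_neg_eq_add, Real.cos_sub, Real.cos_add]; ring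

lemma cot_half_sub_mul_chordSq (θ ψ : ℝ) :
    Real.cot ((ψ - θ) / 2) * chordSq θ ψ = -2 * Real.sin (θ - ψ) := by
  have hx : θ - ψ = -(2 * ((ψ - θ) / 2)) := by ring
  rw [chordSq, hx, Real.cos_neg, Real.sin_neg, Real.cos_two_mul, Real.sin_two_mul,
    Real.cot_eq_cos_div_sin]
  set x := (ψ - θ) / 2
  rcases eq_or_ne (Real.sin x) 0 with hs | hs
  · simp [hs]
  · field_simp
    linear_combination -2 * Real.cos x * Real.sin_sq_add_cos_sq x

lemma HasDerivAt.chordSq {ω φ : ℝ → ℝ} {ω' φ' t : ℝ} (hω : HasDerivAt ω ω' t)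
    (hφ : HasDerivAt φ φ' t) :
    HasDerivAt (fun s => chordSq (ω s) (φ s)) (2 * Real.sin (ω t - φ t) * (ω' - φ')) t := by
  unfold _root_.chordSq
  exact (((hω.fun_sub hφ).cos.const_mul 2).const_sub 2).congr_deriv (by ring)

lemma natDegree_prod_X_sub_C_le {R ι : Type*} [CommRing R] (s : Finset ι) (z : ι → R) :
    (∏ k ∈ s, (X - C (z k))).natDegree ≤ #s :=
  (natDegree_prod_le _ _).trans <| by
    simpa using sum_le_card_nsmul s _ 1 fun k _ => natDegree_X_sub_C_le (z k)

section Paraorthogonal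

variable {ι κ : Type*} (J : Finset ι) (K : Finset κ) (γ ω : ι → ℝ) (φ : κ → ℝ) (ψ : ℝ)

noncomputable def conjPairProd (z : ℂ) : ℂ :=
  (z - exp (ψ * I)) * (z - exp (-ψ * I)) * ∏ k ∈ K, (z - exp (φ k * I))

/-- With `#K = n - 2`, paraorthogonality of `conjPairProd K φ ψ` of degree `n` with respect to
`Σ_{j ∈ J} γ_j δ(θ - ω_j)`. -/
def IsParaorthogonalConjPair : Prop :=
  ∀ g : ℂ[X], g.natDegree ≤ #K + 1 → g.eval 0 = 0 →
    ∑ j ∈ J, (γ j : ℂ) * conjPairProd K φ ψ (exp (ω j * I)) * conj (g.eval (exp (ω j * I))) = 0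

variable {J K γ ω φ ψ}

lemma sq_norm_conjPairProd (θ : ℝ) :
    ‖conjPairProd K φ ψ (exp (θ * I))‖ ^ 2 =
      4 * (Real.cos θ - Real.cos ψ) ^ 2 * ∏ k ∈ K, chordSq θ (φ k) := by
  have hneg : exp (-ψ * I) = exp ((-ψ : ℝ) * I) := by push_cast; rfl
  simp only [conjPairProd, Complex.sq_norm, map_mul, map_prod, normSq_exp_mul_I_sub, hneg]
  rw [chordSq_mul_chordSq_neg]

lemma prod_Icc_eq_conjPairProd {m : ℕ} {φ : ℕ → ℝ} (hconj : φ (m + 1) = -φ (m + 2)) (z : ℂ) :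
    ∏ k ∈ Icc 1 (m + 2), (z - exp (φ k * I)) = conjPairProd (Icc 1 m) φ (φ (m + 2)) z := by
  rw [prod_Icc_succ_top (by omega), prod_Icc_succ_top (by omega), hconj,
    show m + 1 + 1 = m + 2 from rfl, conjPairProd]
  push_cast
  ring

lemma IsParaorthogonalConjPair.sum_mul_eq_zero (hpara : IsParaorthogonalConjPair J K γ ω φ ψ)
    (h : ℂ[X]) (hh : h.natDegree ≤ #K) :
    ∑ j ∈ J, ((γ j * (Real.cos (ω j) - Real.cos ψ) : ℝ) : ℂ) *
      ((∏ k ∈ K, (exp (ω j * I) - exp (φ k * I))) * conj (h.eval (exp (ω j * I)))) = 0 := by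
  have hX := hpara (X * h) (natDegree_mul_le.trans (by grind [natDegree_X_le])) (by simp)
  rw [← mul_right_inj' (two_ne_zero (α := ℂ)), mul_zero, ← hX, mul_sum]
  refine sum_congr rfl fun j _ => ?_
  simp only [conjPairProd, eval_mul, eval_X, map_mul, Complex.ofReal_mul, Complex.ofReal_sub]
  linear_combination -(γ j : ℂ) * (∏ k ∈ K, (exp (ω j * I) - exp (φ k * I))) *
    conj (h.eval (exp (ω j * I))) * exp_sub_mul_exp_sub_mul_conj (ω j) ψ

lemma IsParaorthogonalConjPair.sum_mul_prod_chordSq_eq_zero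
    (hpara : IsParaorthogonalConjPair J K γ ω φ ψ) :
    ∑ j ∈ J, γ j * (Real.cos (ω j) - Real.cos ψ) * ∏ k ∈ K, chordSq (ω j) (φ k) = 0 := by
  have h := hpara.sum_mul_eq_zero _ (natDegree_prod_X_sub_C_le K fun k => exp (φ k * I))
  simp only [eval_prod, eval_sub, eval_X, eval_C, map_prod, ← prod_mul_distrib,
    Complex.mul_conj, normSq_exp_mul_I_sub] at h
  exact_mod_cast h

lemma IsParaorthogonalConjPair.sum_mul_sin_mul_prod_erase_chordSq_eq_zero [DecidableEq κ]
    (hpara : IsParaorthogonalConjPair J K γ ω φ ψ) {k₀ : κ} (hk₀ : k₀ ∈ K) :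
    ∑ j ∈ J, γ j * (Real.cos (ω j) - Real.cos ψ) * Real.sin (ω j - φ k₀) *
      ∏ k ∈ K.erase k₀, chordSq (ω j) (φ k) = 0 := by
  have hdeg : ((X + C (exp (φ k₀ * I))) *
      ∏ k ∈ K.erase k₀, (X - C (exp (φ k * I)))).natDegree ≤ #K := by
    refine natDegree_mul_le.trans ?_
    have := natDegree_prod_X_sub_C_le (K.erase k₀) fun k => exp (φ k * I)
    have := card_erase_add_one hk₀
    grind [natDegree_X_add_C]
  have h := hpara.sum_mul_eq_zero _ hdeg
  simp only [← mul_prod_erase K _ hk₀, eval_mul, eval_prod, eval_sub, eval_add, eval_X, eval_C,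
    map_mul, map_prod] at h
  have hterm : ∀ j ∈ J, ((γ j * (Real.cos (ω j) - Real.cos ψ) : ℝ) : ℂ) *
      (((exp (ω j * I) - exp (φ k₀ * I)) * ∏ k ∈ K.erase k₀, (exp (ω j * I) - exp (φ k * I))) *
        (conj (exp (ω j * I) + exp (φ k₀ * I)) *
          ∏ k ∈ K.erase k₀, conj (exp (ω j * I) - exp (φ k * I)))) =
      ((2 * (γ j * (Real.cos (ω j) - Real.cos ψ) * Real.sin (ω j - φ k₀) *
        ∏ k ∈ K.erase k₀, chordSq (ω j) (φ k)) : ℝ) : ℂ) * I := by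
    intro j _
    have hpair := exp_sub_mul_conj_exp_add (ω j) (φ k₀)
    push_cast at hpair
    push_cast [← normSq_exp_mul_I_sub, ← Complex.mul_conj, prod_mul_distrib]
    linear_combination (γ j * (Complex.cos (ω j) - Complex.cos ψ)) *
      (∏ k ∈ K.erase k₀, (exp (ω j * I) - exp (φ k * I))) *
      (∏ k ∈ K.erase k₀, conj (exp (ω j * I) - exp (φ k * I))) * hpair
  rw [sum_congr rfl hterm, ← sum_mul, ← Complex.ofReal_sum, ← mul_sum] at h
  have h2 := (mul_eq_zero.mp h).resolve_right Complex.I_ne_zero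
  rw [Complex.ofReal_eq_zero] at h2
  exact (mul_eq_zero.mp h2).resolve_left two_ne_zero

lemma sum_cot_mul_prod_chordSq [DecidableEq κ] (θ : ℝ) :
    (∑ k ∈ K, Real.cot ((φ k - θ) / 2)) * ∏ k ∈ K, chordSq θ (φ k) =
      -2 * ∑ k ∈ K, Real.sin (θ - φ k) * ∏ l ∈ K.erase k, chordSq θ (φ l) := by
  rw [sum_mul, mul_sum]
  refine sum_congr rfl fun k hk => ?_
  rw [← mul_prod_erase K _ hk, ← mul_assoc, cot_half_sub_mul_chordSq]
  ring

lemma mul_sq_norm_conjPairProd_mul_one_div_add (γ θ : ℝ) (hψ : exp (θ * I) ≠ exp (ψ * I))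
    (hnegψ : exp (θ * I) ≠ exp ((-ψ : ℝ) * I)) :
    γ * ‖conjPairProd K φ ψ (exp (θ * I))‖ ^ 2 *
        (1 / ‖exp (θ * I) - exp (ψ * I)‖ ^ 2 + 1 / ‖exp (θ * I) - exp (-ψ * I)‖ ^ 2) =
      4 * Real.sin ψ ^ 2 * (γ * ∏ k ∈ K, chordSq θ (φ k)) -
        4 * Real.cos ψ * (γ * (Real.cos θ - Real.cos ψ) * ∏ k ∈ K, chordSq θ (φ k)) := by
  have hneg : exp (-ψ * I) = exp ((-ψ : ℝ) * I) := by push_cast; rfl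
  have hψ' := chordSq_ne_zero hψ
  have hnegψ' := chordSq_ne_zero hnegψ
  rw [sq_norm_conjPairProd, ← chordSq_mul_chordSq_neg, hneg, sq_norm_exp_mul_I_sub,
    sq_norm_exp_mul_I_sub]
  field_simp
  linear_combination (γ * ∏ k ∈ K, chordSq θ (φ k)) *
    (chordSq_add_chordSq_neg θ ψ - 4 * Real.sin_sq_add_cos_sq ψ)

/-- The left factor is `W̃` with `s̃` and `S̃` unfolded. -/
lemma weight_mul_sq_norm_conjPairProd [DecidableEq κ] (γ γ' θ θ' : ℝ)
    (hψ : exp (θ * I) ≠ exp (ψ * I)) (hnegψ : exp (θ * I) ≠ exp ((-ψ : ℝ) * I)) :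
    (1 / (2 * (Real.cos ψ - Real.cos θ)) * γ' - γ * (1 / (2 * (Real.cos ψ - Real.cos θ))) *
        (Real.sin θ / (Real.cos θ - Real.cos ψ) + ∑ k ∈ K, Real.cot ((φ k - θ) / 2)) * θ') *
        ‖conjPairProd K φ ψ (exp (θ * I))‖ ^ 2 =
      -2 * (γ' * (Real.cos θ - Real.cos ψ) * ∏ k ∈ K, chordSq θ (φ k)
        - γ * θ' * (Real.sin θ * ∏ k ∈ K, chordSq θ (φ k)
          - 2 * (Real.cos θ - Real.cos ψ) * ∑ k ∈ K, Real.sin (θ - φ k) *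
            ∏ l ∈ K.erase k, chordSq θ (φ l))) := by
  have hc : Real.cos θ - Real.cos ψ ≠ 0 := sub_ne_zero.mpr (cos_ne_cos_of_exp_ne hψ hnegψ)
  have hc' : Real.cos ψ - Real.cos θ ≠ 0 := fun h => hc (by linarith)
  have hcot := sum_cot_mul_prod_chordSq (K := K) (φ := φ) θ
  rw [sq_norm_conjPairProd]
  field_simp
  linear_combination (-4 * γ * θ' * (Real.cos θ - Real.cos ψ) ^ 2) * hcot

end Paraorthogonal

section Derivative

variable {ι κ : Type*} [DecidableEq κ] {J : Finset ι} {K : Finset κ}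

lemma hasDerivAt_prod_chordSq {ω : ℝ → ℝ} {φ : κ → ℝ → ℝ} {ω' t : ℝ} {φ' : κ → ℝ}
    (hω : HasDerivAt ω ω' t) (hφ : ∀ k ∈ K, HasDerivAt (φ k) (φ' k) t) :
    HasDerivAt (fun s => ∏ k ∈ K, chordSq (ω s) (φ k s))
      (2 * ω' * ∑ k ∈ K, Real.sin (ω t - φ k t) * ∏ l ∈ K.erase k, chordSq (ω t) (φ l t)
        - 2 * ∑ k ∈ K, φ' k *
          (Real.sin (ω t - φ k t) * ∏ l ∈ K.erase k, chordSq (ω t) (φ l t))) t := by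
  refine (HasDerivAt.fun_finsetProd fun k hk => hω.chordSq (hφ k hk)).congr_deriv ?_
  simp only [smul_eq_mul, mul_sum, ← sum_sub_distrib]
  exact sum_congr rfl fun k _ => by ring

theorem sum_deriv_terms_eq_neg_sin_mul_sum {γ ω : ι → ℝ → ℝ} {φ : κ → ℝ → ℝ} {ψ : ℝ → ℝ}
    {γ' ω' : ι → ℝ} {φ' : κ → ℝ} {ψ' t : ℝ}
    (hγ : ∀ j ∈ J, HasDerivAt (γ j) (γ' j) t) (hω : ∀ j ∈ J, HasDerivAt (ω j) (ω' j) t)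
    (hφ : ∀ k ∈ K, HasDerivAt (φ k) (φ' k) t) (hψ : HasDerivAt ψ ψ' t)
    (h₁ : ∀ᶠ s in 𝓝 t, ∑ j ∈ J, γ j s * (Real.cos (ω j s) - Real.cos (ψ s)) *
      ∏ k ∈ K, chordSq (ω j s) (φ k s) = 0)
    (h₂ : ∀ k ∈ K, ∑ j ∈ J, γ j t * (Real.cos (ω j t) - Real.cos (ψ t)) *
      Real.sin (ω j t - φ k t) * ∏ l ∈ K.erase k, chordSq (ω j t) (φ l t) = 0) :
    ∑ j ∈ J, (γ' j * (Real.cos (ω j t) - Real.cos (ψ t)) * ∏ k ∈ K, chordSq (ω j t) (φ k t)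
      - γ j t * ω' j * (Real.sin (ω j t) * ∏ k ∈ K, chordSq (ω j t) (φ k t)
        - 2 * (Real.cos (ω j t) - Real.cos (ψ t)) * ∑ k ∈ K, Real.sin (ω j t - φ k t) *
          ∏ l ∈ K.erase k, chordSq (ω j t) (φ l t))) =
      -(ψ' * Real.sin (ψ t) * ∑ j ∈ J, γ j t * ∏ k ∈ K, chordSq (ω j t) (φ k t)) := by
  have hF := HasDerivAt.fun_sum fun j hj => ((hγ j hj).fun_mul
    ((hω j hj).cos.fun_sub hψ.cos)).fun_mul (hasDerivAt_prod_chordSq (hω j hj) hφ)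
  have hF' := hF.unique ((hasDerivAt_const t 0).congr_of_eventuallyEq h₁)
  have hφ'_terms : ∑ j ∈ J, γ j t * (Real.cos (ω j t) - Real.cos (ψ t)) * ∑ k ∈ K, φ' k *
      (Real.sin (ω j t - φ k t) * ∏ l ∈ K.erase k, chordSq (ω j t) (φ l t)) = 0 := by
    simp_rw [mul_sum]
    rw [sum_comm]
    refine sum_eq_zero fun k hk => ?_
    rw [← mul_zero (φ' k), ← h₂ k hk, mul_sum]
    exact sum_congr rfl fun j _ => by ring
  have hsplit : ∑ j ∈ J, (γ' j * (Real.cos (ω j t) - Real.cos (ψ t)) *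
        ∏ k ∈ K, chordSq (ω j t) (φ k t)
      - γ j t * ω' j * (Real.sin (ω j t) * ∏ k ∈ K, chordSq (ω j t) (φ k t)
        - 2 * (Real.cos (ω j t) - Real.cos (ψ t)) * ∑ k ∈ K, Real.sin (ω j t - φ k t) *
          ∏ l ∈ K.erase k, chordSq (ω j t) (φ l t))
      + ψ' * Real.sin (ψ t) * (γ j t * ∏ k ∈ K, chordSq (ω j t) (φ k t))
      - 2 * (γ j t * (Real.cos (ω j t) - Real.cos (ψ t)) * ∑ k ∈ K, φ' k *
        (Real.sin (ω j t - φ k t) * ∏ l ∈ K.erase k, chordSq (ω j t) (φ l t)))) = 0 := by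
    rw [← hF']
    exact sum_congr rfl fun j _ => by ring
  rw [sum_sub_distrib, sum_add_distrib, ← mul_sum, ← mul_sum, hφ'_terms] at hsplit
  linear_combination hsplit

end Derivative

theorem discrete_popuc_conjugate_pair_derivative_identity_general
    -- the open interval `I = (a, b)`
    (a b : ℝ)
    -- the masses `γ_j` and mass points `ω_j`, `j = 0, …, N`
    (N : ℕ) (γ ω : ℕ → ℝ → ℝ)
    (hγdiff : ∀ j ≤ N, ∀ t ∈ Set.Ioo a b, DifferentiableAt ℝ (γ j) t)
    (hωdiff : ∀ j ≤ N, ∀ t ∈ Set.Ioo a b, DifferentiableAt ℝ (ω j) t)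
    -- the zeros `e^{iφ_k(t)}`, `k = 1, …, n`, of the POPUC `P(·; t)`, with the
    -- conjugate pair `e^{±iφ_n(t)}`
    (n : ℕ) (hn : 2 ≤ n) (φ : ℕ → ℝ → ℝ)
    (hφdiff : ∀ k ∈ Finset.Icc 1 n, ∀ t ∈ Set.Ioo a b, DifferentiableAt ℝ (φ k) t)
    (hconj : ∀ t ∈ Set.Ioo a b, φ (n - 1) t = -φ n t)
    (P : ℂ → ℝ → ℂ)
    (hP : ∀ z t, P z t = ∏ k ∈ Finset.Icc 1 n, (z - Complex.exp (φ k t * Complex.I)))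
    (hsep : ∀ t ∈ Set.Ioo a b, ∀ j ≤ N, ∀ k ∈ Finset.Icc 1 n,
      Complex.exp (ω j t * Complex.I) ≠ Complex.exp (φ k t * Complex.I))
    -- paraorthogonality with respect to the measure `Σ_j γ_j(t) δ(θ − ω_j(t))`
    (hpara : ∀ t ∈ Set.Ioo a b, ∀ g : Polynomial ℂ,
      g.natDegree ≤ n - 1 → g.eval 0 = 0 →
      ∑ j ∈ Finset.range (N + 1), (γ j t : ℂ) *
        P (Complex.exp (ω j t * Complex.I)) t *
        (starRingEnd ℂ) (g.eval (Complex.exp (ω j t * Complex.I))) = 0)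
    -- the functions `s̃`, `S̃` and `W̃_j`
    (s' : ℝ → ℝ → ℝ)
    (hs' : ∀ θ t, s' θ t = 1 / (2 * (Real.cos (φ n t) - Real.cos θ)))
    (S' : ℝ → ℝ → ℝ)
    (hS' : ∀ θ t, S' θ t = Real.sin θ / (Real.cos θ - Real.cos (φ n t)) +
      ∑ k ∈ Finset.Icc 1 (n - 2), Real.cot ((φ k t - θ) / 2))
    (W' : ℕ → ℝ → ℝ)
    (hW' : ∀ j t, W' j t = s' (ω j t) t * deriv (γ j) t -
      γ j t * s' (ω j t) t * S' (ω j t) t * deriv (ω j) t)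
    -- conclusion
    : ∀ t ∈ Set.Ioo a b,
      deriv (φ n) t * ∑ j ∈ Finset.range (N + 1), γ j t *
          ‖P (Complex.exp (ω j t * Complex.I)) t‖ ^ 2 *
          (1 / ‖Complex.exp (ω j t * Complex.I) -
              Complex.exp (φ n t * Complex.I)‖ ^ 2 +
            1 / ‖Complex.exp (ω j t * Complex.I) -
              Complex.exp (-φ n t * Complex.I)‖ ^ 2)
        = 2 * Real.sin (φ n t) * ∑ j ∈ Finset.range (N + 1), W' j t *
            ‖P (Complex.exp (ω j t * Complex.I)) t‖ ^ 2 := by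
  obtain ⟨m, rfl⟩ : ∃ m, n = m + 2 := ⟨n - 2, by omega⟩
  intro t ht
  have hfac : ∀ s ∈ Set.Ioo a b, ∀ z,
      P z s = conjPairProd (Icc 1 m) (φ · s) (φ (m + 2) s) z := fun s hs z => by
    rw [hP, prod_Icc_eq_conjPairProd (hconj s hs)]
  have hpara' : ∀ s ∈ Set.Ioo a b, IsParaorthogonalConjPair (range (N + 1)) (Icc 1 m)
      (γ · s) (ω · s) (φ · s) (φ (m + 2) s) := by
    intro s hs g hg h0
    simp only [← hfac s hs]
    exact hpara s hs g (by simpa using hg) h0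
  have hsepψ : ∀ j ∈ range (N + 1), exp (ω j t * I) ≠ exp (φ (m + 2) t * I) :=
    fun j hj => hsep t ht j (mem_range_succ_iff.mp hj) (m + 2) (by simp)
  have hsepNeg : ∀ j ∈ range (N + 1), exp (ω j t * I) ≠ exp ((-φ (m + 2) t : ℝ) * I) := by
    intro j hj
    rw [← hconj t ht]
    exact hsep t ht j (mem_range_succ_iff.mp hj) (m + 1) (by simp)
  simp only [hfac t ht, hW', hs', hS', Nat.add_sub_cancel]
  rw [sum_congr rfl fun j hj =>
      mul_sq_norm_conjPairProd_mul_one_div_add _ _ (hsepψ j hj) (hsepNeg j hj),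
    sum_congr rfl fun j hj =>
      weight_mul_sq_norm_conjPairProd _ _ _ _ (hsepψ j hj) (hsepNeg j hj)]
  have hE₁ := (hpara' t ht).sum_mul_prod_chordSq_eq_zero
  have hderiv := sum_deriv_terms_eq_neg_sin_mul_sum
    (fun j hj => (hγdiff j (mem_range_succ_iff.mp hj) t ht).hasDerivAt)
    (fun j hj => (hωdiff j (mem_range_succ_iff.mp hj) t ht).hasDerivAt)
    (fun k hk => (hφdiff k (Icc_subset_Icc_right (by omega) hk) t ht).hasDerivAt)
    (hφdiff (m + 2) (by simp) t ht).hasDerivAt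
    (eventually_of_mem (Ioo_mem_nhds ht.1 ht.2) fun s hs =>
      (hpara' s hs).sum_mul_prod_chordSq_eq_zero)
    fun k hk => (hpara' t ht).sum_mul_sin_mul_prod_erase_chordSq_eq_zero hk
  rw [sum_sub_distrib, ← mul_sum, ← mul_sum, hE₁, ← mul_sum, hderiv]
  ring

/-- Under the discrete paraorthogonality setup with a conjugate pair of zeros
`e^{±iφ_n(t)}`, the identity
`φ_n'(t) Σ_j γ_j(t) |P(e^{iω_j(t)}; t)|² (1/|e^{iω_j(t)} − e^{iφ_n(t)}|² +
1/|e^{iω_j(t)} − e^{−iφ_n(t)}|²) = 2 sin(φ_n(t)) Σ_j W̃_j(t) |P(e^{iω_j(t)}; t)|²`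
holds for every `t ∈ I`. -/
theorem discrete_popuc_conjugate_pair_derivative_identity
    -- the open interval `I = (a, b)`
    (a b : ℝ) (hab : a < b)
    -- the masses `γ_j` and mass points `ω_j`, `j = 0, …, N`
    (N : ℕ) (γ ω : ℕ → ℝ → ℝ)
    (hγpos : ∀ j ≤ N, ∀ t ∈ Set.Ioo a b, 0 < γ j t)
    (hγdiff : ∀ j ≤ N, ∀ t ∈ Set.Ioo a b, DifferentiableAt ℝ (γ j) t)
    (hωdiff : ∀ j ≤ N, ∀ t ∈ Set.Ioo a b, DifferentiableAt ℝ (ω j) t)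
    -- the zeros `e^{iφ_k(t)}`, `k = 1, …, n`, of the POPUC `P(·; t)`, with the
    -- conjugate pair `e^{±iφ_n(t)}`
    (n : ℕ) (hn : 2 ≤ n) (φ : ℕ → ℝ → ℝ)
    (hφdiff : ∀ k ∈ Finset.Icc 1 n, ∀ t ∈ Set.Ioo a b, DifferentiableAt ℝ (φ k) t)
    (hconj : ∀ t ∈ Set.Ioo a b, φ (n - 1) t = -φ n t)
    (hrange : ∀ t ∈ Set.Ioo a b, φ n t ∈ Set.Ioo 0 Real.pi)
    (P : ℂ → ℝ → ℂ)
    (hP : ∀ z t, P z t = ∏ k ∈ Finset.Icc 1 n, (z - Complex.exp (φ k t * Complex.I)))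
    (hdistinct : ∀ t ∈ Set.Ioo a b, ∀ j ∈ Finset.Icc 1 n, ∀ k ∈ Finset.Icc 1 n, j ≠ k →
      Complex.exp (φ j t * Complex.I) ≠ Complex.exp (φ k t * Complex.I))
    (hsep : ∀ t ∈ Set.Ioo a b, ∀ j ≤ N, ∀ k ∈ Finset.Icc 1 n,
      Complex.exp (ω j t * Complex.I) ≠ Complex.exp (φ k t * Complex.I))
    -- paraorthogonality with respect to the measure `Σ_j γ_j(t) δ(θ − ω_j(t))`
    (hpara : ∀ t ∈ Set.Ioo a b, ∀ g : Polynomial ℂ,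
      g.natDegree ≤ n - 1 → g.eval 0 = 0 →
      ∑ j ∈ Finset.range (N + 1), (γ j t : ℂ) *
        P (Complex.exp (ω j t * Complex.I)) t *
        (starRingEnd ℂ) (g.eval (Complex.exp (ω j t * Complex.I))) = 0)
    -- the functions `s̃`, `S̃` and `W̃_j`
    (s' : ℝ → ℝ → ℝ)
    (hs' : ∀ θ t, s' θ t = 1 / (2 * (Real.cos (φ n t) - Real.cos θ)))
    (S' : ℝ → ℝ → ℝ)
    (hS' : ∀ θ t, S' θ t = Real.sin θ / (Real.cos θ - Real.cos (φ n t)) +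
      ∑ k ∈ Finset.Icc 1 (n - 2), Real.cot ((φ k t - θ) / 2))
    (W' : ℕ → ℝ → ℝ)
    (hW' : ∀ j t, W' j t = s' (ω j t) t * deriv (γ j) t -
      γ j t * s' (ω j t) t * S' (ω j t) t * deriv (ω j) t)
    -- conclusion
    : ∀ t ∈ Set.Ioo a b,
      deriv (φ n) t * ∑ j ∈ Finset.range (N + 1), γ j t *
          ‖P (Complex.exp (ω j t * Complex.I)) t‖ ^ 2 *
          (1 / ‖Complex.exp (ω j t * Complex.I) -
              Complex.exp (φ n t * Complex.I)‖ ^ 2 +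
            1 / ‖Complex.exp (ω j t * Complex.I) -
              Complex.exp (-φ n t * Complex.I)‖ ^ 2)
        = 2 * Real.sin (φ n t) * ∑ j ∈ Finset.range (N + 1), W' j t *
            ‖P (Complex.exp (ω j t * Complex.I)) t‖ ^ 2 :=
  discrete_popuc_conjugate_pair_derivative_identity_general a b N γ ω hγdiff hωdiff n hn φ hφdiff
    hconj P hP hsep hpara s' hs' S' hS' W' hW'
end

section
/- (Theorem, discrete measure, conjugate pair, monotonicity.) Under the stated discrete paraorthogonality setup with a conjugate pair of zeros, if at some t ∈ I one has W̃_j(t) ≥ 0 for all j = 0,…,N and W̃_j(t) > 0 for at least one j, then φ_n′(t) > 0; that is, the zero ζ(t) = e^{iφ_n(t)} moves strictly counterclockwise along the unit circle as t increases. -/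
open Polynomial Complex Finset ComplexConjugate Filter Topology

/-!
Testing paraorthogonality against `z ∏_{k ∈ r} (z - e^{iφ_k})`, `r ⊆ {1, …, n-2}`, turns the
conjugate pair into the real factor `A_j = 2 cos ω_j - 2 cos φ_n` and the other zeros into
`|e^{iω_j} - e^{iφ_k}|²`. For `r = {1, …, n-2}` this is an identity `Σ_j γ_j A_j B_j = 0` valid
for all `t`; leaving out one `φ_m` and taking imaginary parts shows that the `φ_m'`-terms of its
`t`-derivative cancel. What remains of the derivative is
`φ_n' · 2 sin φ_n · Σ_j γ_j B_j = Σ_j A_j² B_j W̃_j`, and `sin φ_n`, `γ_j`, `B_j` are positive.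
-/

theorem Complex.normSq_exp_mul_I_sub_exp_mul_I (a b : ℝ) :
    normSq (exp (a * I) - exp (b * I)) = 2 - 2 * Real.cos (a - b) := by
  rw [normSq_apply]
  simp only [sub_re, sub_im, exp_ofReal_mul_I_re, exp_ofReal_mul_I_im, Real.cos_sub]
  linear_combination Real.sin_sq_add_cos_sq a + Real.sin_sq_add_cos_sq b

theorem Complex.two_sub_two_cos_sub_pos {a b : ℝ} (h : exp (a * I) ≠ exp (b * I)) :
    0 < 2 - 2 * Real.cos (a - b) := by
  rw [← normSq_exp_mul_I_sub_exp_mul_I]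
  exact normSq_pos.mpr (sub_ne_zero.mpr h)

theorem Complex.cos_sub_ne_one_of_exp_mul_I_ne {a b : ℝ} (h : exp (a * I) ≠ exp (b * I)) :
    Real.cos (a - b) ≠ 1 := fun h1 => by
  have := two_sub_two_cos_sub_pos h
  rw [h1] at this
  norm_num at this

theorem Complex.exp_sub_exp_mul_exp_sub_exp_neg_mul_conj (ω θ : ℝ) :
    (exp (ω * I) - exp (θ * I)) * (exp (ω * I) - exp (↑(-θ) * I)) * conj (exp (ω * I)) =
      ((2 * Real.cos ω - 2 * Real.cos θ : ℝ) : ℂ) := by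
  apply Complex.ext <;>
  simp only [mul_re, mul_im, sub_re, sub_im, conj_re, conj_im, exp_ofReal_mul_I_re,
    exp_ofReal_mul_I_im, ofReal_re, ofReal_im, Real.cos_neg, Real.sin_neg]
  · linear_combination (Real.cos ω - 2 * Real.cos θ) * Real.sin_sq_add_cos_sq ω +
      Real.cos ω * Real.sin_sq_add_cos_sq θ
  · linear_combination Real.sin ω * Real.sin_sq_add_cos_sq ω - Real.sin ω * Real.sin_sq_add_cos_sq θ

theorem Complex.two_cos_sub_two_cos_ne_zero {ω θ : ℝ} (h : exp (ω * I) ≠ exp (θ * I))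
    (h' : exp (ω * I) ≠ exp (↑(-θ) * I)) : 2 * Real.cos ω - 2 * Real.cos θ ≠ 0 := by
  have hprod := exp_sub_exp_mul_exp_sub_exp_neg_mul_conj ω θ
  have hne : (exp (ω * I) - exp (θ * I)) * (exp (ω * I) - exp (↑(-θ) * I)) *
      conj (exp (ω * I)) ≠ 0 :=
    mul_ne_zero (mul_ne_zero (sub_ne_zero.mpr h) (sub_ne_zero.mpr h'))
      ((_root_.map_ne_zero _).mpr (exp_ne_zero _))
  exact_mod_cast hprod ▸ hne

theorem Complex.im_exp_sub_exp_mul_conj (ω ψ : ℝ) :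
    ((exp (ω * I) - exp (ψ * I)) * conj (exp (ψ * I))).im = Real.sin (ω - ψ) := by
  simp only [mul_im, sub_re, sub_im, conj_re, conj_im, exp_ofReal_mul_I_re,
    exp_ofReal_mul_I_im, Real.sin_sub]
  ring

theorem Real.cot_neg (x : ℝ) : Real.cot (-x) = -Real.cot x := by
  rw [Real.cot_eq_cos_div_sin, Real.cot_eq_cos_div_sin, Real.cos_neg, Real.sin_neg, div_neg]

theorem Real.cot_half_mul_two_sub_two_cos {x : ℝ} (h : Real.cos x ≠ 1) :
    Real.cot (x / 2) * (2 - 2 * Real.cos x) = 2 * Real.sin x := by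
  have hc : Real.cos x = 2 * Real.cos (x / 2) ^ 2 - 1 := by rw [← Real.cos_two_mul]; ring_nf
  have hs : Real.sin x = 2 * Real.sin (x / 2) * Real.cos (x / 2) := by
    rw [← Real.sin_two_mul]; ring_nf
  have hs0 : Real.sin (x / 2) ≠ 0 := by
    intro h0
    apply h
    nlinarith [Real.sin_sq_add_cos_sq (x / 2)]
  rw [Real.cot_eq_cos_div_sin, hc, hs]
  field_simp
  linear_combination (-2 * Real.cos (x / 2)) * Real.sin_sq_add_cos_sq (x / 2)

theorem Finset.prod_Icc_one_eq_prod_Icc_sub_two_mul {M : Type*} [CommMonoid M] (f : ℕ → M)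
    {n : ℕ} (hn : 2 ≤ n) :
    ∏ k ∈ Icc 1 n, f k = (∏ k ∈ Icc 1 (n - 2), f k) * (f n * f (n - 1)) := by
  obtain ⟨m, rfl⟩ := Nat.exists_eq_add_of_le' hn
  rw [Nat.add_sub_cancel, show m + 2 - 1 = m + 1 by omega, prod_Icc_succ_top (by omega),
    prod_Icc_succ_top (by omega), mul_assoc, mul_comm (f (m + 1))]

-- the squared modulus of `∏_{k ∈ s} (e^{iω} - e^{iψ_k})`
noncomputable def chordProd (s : Finset ℕ) (ψ : ℕ → ℝ) (ω : ℝ) : ℝ :=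
  ∏ k ∈ s, (2 - 2 * Real.cos (ω - ψ k))

theorem prod_exp_sub_exp_mul_conj (s : Finset ℕ) (ψ : ℕ → ℝ) (ω : ℝ) :
    (∏ k ∈ s, (exp (ω * I) - exp (ψ k * I))) * conj (∏ k ∈ s, (exp (ω * I) - exp (ψ k * I))) =
      (chordProd s ψ ω : ℂ) := by
  rw [map_prod, ← prod_mul_distrib, chordProd, ofReal_prod]
  exact prod_congr rfl fun k _ => by rw [mul_conj, normSq_exp_mul_I_sub_exp_mul_I]

theorem chordProd_pos {s : Finset ℕ} {ψ : ℕ → ℝ} {ω : ℝ}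
    (h : ∀ k ∈ s, exp (ω * I) ≠ exp (ψ k * I)) : 0 < chordProd s ψ ω :=
  prod_pos fun k hk => two_sub_two_cos_sub_pos (h k hk)

theorem chordProd_mul_cot {s : Finset ℕ} {ψ : ℕ → ℝ} {ω : ℝ} {m : ℕ} (hm : m ∈ s)
    (h : Real.cos (ω - ψ m) ≠ 1) :
    chordProd s ψ ω * Real.cot ((ψ m - ω) / 2) =
      -(2 * Real.sin (ω - ψ m) * chordProd (s.erase m) ψ ω) := by
  rw [chordProd, ← mul_prod_erase s _ hm, ← chordProd,
    show (ψ m - ω) / 2 = -((ω - ψ m) / 2) by ring, Real.cot_neg]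
  linear_combination (-chordProd (s.erase m) ψ ω) * Real.cot_half_mul_two_sub_two_cos h

def IsParaorthogonal (n N : ℕ) (γ ω : ℕ → ℝ) (p : ℂ → ℂ) : Prop :=
  ∀ g : ℂ[X], g.natDegree ≤ n - 1 → g.eval 0 = 0 →
    ∑ j ∈ range (N + 1), (γ j : ℂ) * p (exp (ω j * I)) * conj (g.eval (exp (ω j * I))) = 0

theorem prod_mul_pair_mul_conj_mul_prod {s r : Finset ℕ} (hr : r ⊆ s) (ψ : ℕ → ℝ) (θ ω : ℝ) :
    (∏ k ∈ s, (exp (ω * I) - exp (ψ k * I))) *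
        ((exp (ω * I) - exp (θ * I)) * (exp (ω * I) - exp (↑(-θ) * I))) *
        conj (exp (ω * I) * ∏ k ∈ r, (exp (ω * I) - exp (ψ k * I))) =
      ((2 * Real.cos ω - 2 * Real.cos θ) * chordProd r ψ ω : ℝ) *
        ∏ k ∈ s \ r, (exp (ω * I) - exp (ψ k * I)) := by
  rw [← prod_sdiff hr, map_mul, ofReal_mul, ← prod_exp_sub_exp_mul_conj,
    ← exp_sub_exp_mul_exp_sub_exp_neg_mul_conj]
  ring

namespace IsParaorthogonal

variable {n N : ℕ} {γ ω ψ : ℕ → ℝ} {θ : ℝ} {p : ℂ → ℂ} {s : Finset ℕ}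

theorem sum_mul_prod_sdiff_eq_zero (hpara : IsParaorthogonal n N γ ω p)
    (hp : ∀ z, p z = (∏ k ∈ s, (z - exp (ψ k * I))) * ((z - exp (θ * I)) * (z - exp (↑(-θ) * I))))
    (hn : s.card + 2 ≤ n) {r : Finset ℕ} (hr : r ⊆ s) :
    ∑ j ∈ range (N + 1),
      ((γ j * ((2 * Real.cos (ω j) - 2 * Real.cos θ) * chordProd r ψ (ω j)) : ℝ) : ℂ) *
        ∏ k ∈ s \ r, (exp (ω j * I) - exp (ψ k * I)) = 0 := by
  have hdeg : (X * ∏ k ∈ r, (X - C (exp (ψ k * I)))).natDegree ≤ n - 1 := by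
    refine natDegree_mul_le.trans ?_
    have := card_le_card hr
    rw [natDegree_X, natDegree_finsetProd_X_sub_C_eq_card]
    omega
  rw [← hpara _ hdeg (by simp)]
  refine sum_congr rfl fun j _ => ?_
  simp only [eval_mul, eval_X, eval_prod, eval_sub, eval_C]
  rw [hp, mul_assoc (γ j : ℂ), prod_mul_pair_mul_conj_mul_prod hr, ofReal_mul]
  ring

theorem sum_mul_chordProd_eq_zero (hpara : IsParaorthogonal n N γ ω p)
    (hp : ∀ z, p z = (∏ k ∈ s, (z - exp (ψ k * I))) * ((z - exp (θ * I)) * (z - exp (↑(-θ) * I))))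
    (hn : s.card + 2 ≤ n) :
    ∑ j ∈ range (N + 1), γ j * ((2 * Real.cos (ω j) - 2 * Real.cos θ) * chordProd s ψ (ω j)) = 0 := by
  have h := hpara.sum_mul_prod_sdiff_eq_zero hp hn subset_rfl
  simp only [sdiff_self, bot_eq_empty, prod_empty, mul_one] at h
  exact_mod_cast h

theorem sum_mul_chordProd_erase_mul_sin_eq_zero (hpara : IsParaorthogonal n N γ ω p)
    (hp : ∀ z, p z = (∏ k ∈ s, (z - exp (ψ k * I))) * ((z - exp (θ * I)) * (z - exp (↑(-θ) * I))))
    (hn : s.card + 2 ≤ n) {m : ℕ} (hm : m ∈ s) :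
    ∑ j ∈ range (N + 1), γ j * ((2 * Real.cos (ω j) - 2 * Real.cos θ) *
      chordProd (s.erase m) ψ (ω j)) * Real.sin (ω j - ψ m) = 0 := by
  have h := hpara.sum_mul_prod_sdiff_eq_zero hp hn (erase_subset m s)
  rw [sdiff_erase_self hm] at h
  have him := congrArg (fun z => (z * conj (exp (ψ m * I))).im) h
  simpa only [prod_singleton, sum_mul, im_sum, mul_assoc, im_ofReal_mul, im_exp_sub_exp_mul_conj,
    zero_mul, zero_im] using him

end IsParaorthogonal

-- the paper's `s̃`, `S̃` and `W̃_j`, with `θ = φ_n`; `γ'`, `ω'` stand for the derivatives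
noncomputable def sTilde (θ ω : ℝ) : ℝ := 1 / (2 * (Real.cos θ - Real.cos ω))

noncomputable def STilde (s : Finset ℕ) (ψ : ℕ → ℝ) (θ ω : ℝ) : ℝ :=
  Real.sin ω / (Real.cos ω - Real.cos θ) + ∑ k ∈ s, Real.cot ((ψ k - ω) / 2)

noncomputable def WTilde (s : Finset ℕ) (ψ : ℕ → ℝ) (θ ω γ γ' ω' : ℝ) : ℝ :=
  sTilde θ ω * γ' - γ * sTilde θ ω * STilde s ψ θ ω * ω'

theorem sq_mul_chordProd_mul_WTilde {s : Finset ℕ} {ψ : ℕ → ℝ} {θ ω : ℝ} (γ γ' ω' : ℝ)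
    (hA : 2 * Real.cos ω - 2 * Real.cos θ ≠ 0) (hψ : ∀ m ∈ s, Real.cos (ω - ψ m) ≠ 1) :
    (2 * Real.cos ω - 2 * Real.cos θ) ^ 2 * chordProd s ψ ω * WTilde s ψ θ ω γ γ' ω' =
      -(γ' * ((2 * Real.cos ω - 2 * Real.cos θ) * chordProd s ψ ω)) +
        2 * γ * Real.sin ω * ω' * chordProd s ψ ω -
        γ * (2 * Real.cos ω - 2 * Real.cos θ) * ω' *
          ∑ m ∈ s, 2 * Real.sin (ω - ψ m) * chordProd (s.erase m) ψ ω := by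
  have hs : (2 * Real.cos ω - 2 * Real.cos θ) * sTilde θ ω = -1 := by
    have : Real.cos θ - Real.cos ω ≠ 0 := fun h => hA (by linarith)
    rw [sTilde]
    field_simp
    ring
  have hS : (2 * Real.cos ω - 2 * Real.cos θ) * STilde s ψ θ ω =
      2 * Real.sin ω + (2 * Real.cos ω - 2 * Real.cos θ) * ∑ k ∈ s, Real.cot ((ψ k - ω) / 2) := by
    have : Real.cos ω - Real.cos θ ≠ 0 := fun h => hA (by linarith)
    rw [STilde]
    field_simp
  have hcot : chordProd s ψ ω * ∑ k ∈ s, Real.cot ((ψ k - ω) / 2) =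
      -∑ m ∈ s, 2 * Real.sin (ω - ψ m) * chordProd (s.erase m) ψ ω := by
    rw [mul_sum, ← sum_neg_distrib]
    exact sum_congr rfl fun m hm => by rw [chordProd_mul_cot hm (hψ m hm), mul_assoc]
  rw [WTilde]
  linear_combination
    ((2 * Real.cos ω - 2 * Real.cos θ) * chordProd s ψ ω * γ' -
        γ * ω' * chordProd s ψ ω * ((2 * Real.cos ω - 2 * Real.cos θ) * STilde s ψ θ ω)) * hs +
      γ * ω' * chordProd s ψ ω * hS + γ * ω' * (2 * Real.cos ω - 2 * Real.cos θ) * hcot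

theorem hasDerivAt_chordProd {s : Finset ℕ} {ψ : ℕ → ℝ → ℝ} {ψ' : ℕ → ℝ} {ω : ℝ → ℝ}
    {ω' t : ℝ} (hω : HasDerivAt ω ω' t) (hψ : ∀ k ∈ s, HasDerivAt (ψ k) (ψ' k) t) :
    HasDerivAt (fun u => chordProd s (fun k => ψ k u) (ω u))
      (∑ m ∈ s, 2 * Real.sin (ω t - ψ m t) * chordProd (s.erase m) (fun k => ψ k t) (ω t) *
        (ω' - ψ' m)) t := by
  refine (HasDerivAt.fun_finsetProd (u := s)
    (fun m hm => (((hω.sub (hψ m hm)).cos).const_mul 2).const_sub 2)).congr_deriv ?_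
  exact sum_congr rfl fun m _ => by simp only [chordProd, smul_eq_mul, Pi.sub_apply]; ring

theorem mul_sum_eq_sum_sq_mul_chordProd_mul_WTilde {J s : Finset ℕ} {γ ω ψ : ℕ → ℝ → ℝ}
    {θ : ℝ → ℝ} {γ' ω' ψ' : ℕ → ℝ} {θ' t : ℝ}
    (hγ : ∀ j ∈ J, HasDerivAt (γ j) (γ' j) t) (hω : ∀ j ∈ J, HasDerivAt (ω j) (ω' j) t)
    (hψ : ∀ k ∈ s, HasDerivAt (ψ k) (ψ' k) t) (hθ : HasDerivAt θ θ' t)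
    (hF : ∀ᶠ u in 𝓝 t, ∑ j ∈ J, γ j u * ((2 * Real.cos (ω j u) - 2 * Real.cos (θ u)) *
      chordProd s (fun k => ψ k u) (ω j u)) = 0)
    (horth : ∀ m ∈ s, ∑ j ∈ J, γ j t * ((2 * Real.cos (ω j t) - 2 * Real.cos (θ t)) *
      chordProd (s.erase m) (fun k => ψ k t) (ω j t)) * Real.sin (ω j t - ψ m t) = 0)
    (hA : ∀ j ∈ J, 2 * Real.cos (ω j t) - 2 * Real.cos (θ t) ≠ 0)
    (hψne : ∀ j ∈ J, ∀ m ∈ s, Real.cos (ω j t - ψ m t) ≠ 1) :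
    θ' * (2 * Real.sin (θ t) * ∑ j ∈ J, γ j t * chordProd s (fun k => ψ k t) (ω j t)) =
      ∑ j ∈ J, (2 * Real.cos (ω j t) - 2 * Real.cos (θ t)) ^ 2 *
        chordProd s (fun k => ψ k t) (ω j t) *
          WTilde s (fun k => ψ k t) (θ t) (ω j t) (γ j t) (γ' j) (ω' j) := by
  have hderiv := HasDerivAt.fun_sum (u := J) fun j hj => (hγ j hj).fun_mul
    ((((hω j hj).cos.const_mul 2).fun_sub (hθ.cos.const_mul 2)).fun_mul
      (hasDerivAt_chordProd (hω j hj) hψ))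
  have hzero := hderiv.unique ((hasDerivAt_const t 0).congr_of_eventuallyEq hF)
  have hcross : ∑ j ∈ J, γ j t * (2 * Real.cos (ω j t) - 2 * Real.cos (θ t)) *
      ∑ m ∈ s, 2 * Real.sin (ω j t - ψ m t) * chordProd (s.erase m) (fun k => ψ k t) (ω j t) *
        ψ' m = 0 := by
    simp_rw [mul_sum]
    rw [sum_comm]
    refine sum_eq_zero fun m hm => ?_
    rw [← mul_zero (2 * ψ' m), ← horth m hm, mul_sum]
    exact sum_congr rfl fun j _ => by ring
  have hterm : ∀ j ∈ J, γ' j * ((2 * Real.cos (ω j t) - 2 * Real.cos (θ t)) *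
      chordProd s (fun k => ψ k t) (ω j t)) + γ j t *
        ((2 * (-Real.sin (ω j t) * ω' j) - 2 * (-Real.sin (θ t) * θ')) *
          chordProd s (fun k => ψ k t) (ω j t) + (2 * Real.cos (ω j t) - 2 * Real.cos (θ t)) *
          ∑ m ∈ s, 2 * Real.sin (ω j t - ψ m t) * chordProd (s.erase m) (fun k => ψ k t) (ω j t) *
            (ω' j - ψ' m)) =
      -((2 * Real.cos (ω j t) - 2 * Real.cos (θ t)) ^ 2 * chordProd s (fun k => ψ k t) (ω j t) *
          WTilde s (fun k => ψ k t) (θ t) (ω j t) (γ j t) (γ' j) (ω' j)) +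
        θ' * (2 * Real.sin (θ t) * (γ j t * chordProd s (fun k => ψ k t) (ω j t))) -
        γ j t * (2 * Real.cos (ω j t) - 2 * Real.cos (θ t)) *
          ∑ m ∈ s, 2 * Real.sin (ω j t - ψ m t) * chordProd (s.erase m) (fun k => ψ k t) (ω j t) *
            ψ' m := by
    intro j hj
    rw [sq_mul_chordProd_mul_WTilde _ _ _ (hA j hj) (hψne j hj)]
    simp only [mul_sub, sum_sub_distrib, ← sum_mul]
    ring
  rw [sum_congr rfl hterm, sum_sub_distrib, sum_add_distrib, hcross, sum_neg_distrib,
    ← mul_sum, ← mul_sum] at hzero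
  linarith

theorem pos_of_mul_eq_sum_sq_mul_mul {J : Finset ℕ} {θ θ' : ℝ} {γ A B W : ℕ → ℝ}
    (hθ : θ ∈ Set.Ioo 0 Real.pi) (hγ : ∀ j ∈ J, 0 < γ j) (hA : ∀ j ∈ J, A j ≠ 0)
    (hB : ∀ j ∈ J, 0 < B j) (hW : ∀ j ∈ J, 0 ≤ W j) (hWpos : ∃ j ∈ J, 0 < W j)
    (h : θ' * (2 * Real.sin θ * ∑ j ∈ J, γ j * B j) = ∑ j ∈ J, A j ^ 2 * B j * W j) :
    0 < θ' := by
  obtain ⟨j₀, hj₀, hWj₀⟩ := hWpos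
  have hden : 0 < 2 * Real.sin θ * ∑ j ∈ J, γ j * B j :=
    mul_pos (mul_pos two_pos (Real.sin_pos_of_pos_of_lt_pi hθ.1 hθ.2))
      (sum_pos (fun j hj => mul_pos (hγ j hj) (hB j hj)) ⟨j₀, hj₀⟩)
  have hnum : 0 < ∑ j ∈ J, A j ^ 2 * B j * W j :=
    sum_pos' (fun j hj => mul_nonneg (mul_nonneg (sq_nonneg _) (hB j hj).le) (hW j hj))
      ⟨j₀, hj₀, mul_pos (mul_pos (pow_two_pos_of_ne_zero (hA j₀ hj₀)) (hB j₀ hj₀)) hWj₀⟩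
  exact pos_of_mul_pos_left (h ▸ hnum) hden.le

theorem discrete_popuc_conjugate_pair_zero_moves_counterclockwise_general
    -- the open interval `I = (a, b)`
    (a b : ℝ)
    -- the masses `γ_j` and mass points `ω_j`, `j = 0, …, N`
    (N : ℕ) (γ ω : ℕ → ℝ → ℝ)
    (hγpos : ∀ j ≤ N, ∀ t ∈ Set.Ioo a b, 0 < γ j t)
    (hγdiff : ∀ j ≤ N, ∀ t ∈ Set.Ioo a b, DifferentiableAt ℝ (γ j) t)
    (hωdiff : ∀ j ≤ N, ∀ t ∈ Set.Ioo a b, DifferentiableAt ℝ (ω j) t)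
    -- the zeros `e^{iφ_k(t)}`, `k = 1, …, n`, of the POPUC `P(·; t)`, with the
    -- conjugate pair `e^{±iφ_n(t)}`
    (n : ℕ) (hn : 2 ≤ n) (φ : ℕ → ℝ → ℝ)
    (hφdiff : ∀ k ∈ Finset.Icc 1 n, ∀ t ∈ Set.Ioo a b, DifferentiableAt ℝ (φ k) t)
    (hconj : ∀ t ∈ Set.Ioo a b, φ (n - 1) t = -φ n t)
    (hrange : ∀ t ∈ Set.Ioo a b, φ n t ∈ Set.Ioo 0 Real.pi)
    (P : ℂ → ℝ → ℂ)
    (hP : ∀ z t, P z t = ∏ k ∈ Finset.Icc 1 n, (z - Complex.exp (φ k t * Complex.I)))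
    (hsep : ∀ t ∈ Set.Ioo a b, ∀ j ≤ N, ∀ k ∈ Finset.Icc 1 n,
      Complex.exp (ω j t * Complex.I) ≠ Complex.exp (φ k t * Complex.I))
    -- paraorthogonality with respect to the measure `Σ_j γ_j(t) δ(θ − ω_j(t))`
    (hpara : ∀ t ∈ Set.Ioo a b, ∀ g : Polynomial ℂ,
      g.natDegree ≤ n - 1 → g.eval 0 = 0 →
      ∑ j ∈ Finset.range (N + 1), (γ j t : ℂ) *
        P (Complex.exp (ω j t * Complex.I)) t *
        (starRingEnd ℂ) (g.eval (Complex.exp (ω j t * Complex.I))) = 0)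
    -- the functions `s̃`, `S̃` and `W̃_j`
    (s' : ℝ → ℝ → ℝ)
    (hs' : ∀ θ t, s' θ t = 1 / (2 * (Real.cos (φ n t) - Real.cos θ)))
    (S' : ℝ → ℝ → ℝ)
    (hS' : ∀ θ t, S' θ t = Real.sin θ / (Real.cos θ - Real.cos (φ n t)) +
      ∑ k ∈ Finset.Icc 1 (n - 2), Real.cot ((φ k t - θ) / 2))
    (W' : ℕ → ℝ → ℝ)
    (hW' : ∀ j t, W' j t = s' (ω j t) t * deriv (γ j) t -
      γ j t * s' (ω j t) t * S' (ω j t) t * deriv (ω j) t)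
    -- hypotheses on the sign of the `W̃_j` at a given `t`
    (t : ℝ) (ht : t ∈ Set.Ioo a b)
    (hWnonneg : ∀ j ≤ N, 0 ≤ W' j t)
    (hWpos : ∃ j ≤ N, 0 < W' j t)
    -- conclusion
    : 0 < deriv (φ n) t := by
  have hJ : ∀ j ∈ range (N + 1), j ≤ N := fun j hj => mem_range_succ_iff.mp hj
  have hcard : (Icc 1 (n - 2)).card + 2 ≤ n := by simp only [Nat.card_Icc]; omega
  have hsub : Icc 1 (n - 2) ⊆ Icc 1 n := Icc_subset_Icc_right (by omega)
  have hfactor : ∀ u ∈ Set.Ioo a b, ∀ z, P z u = (∏ k ∈ Icc 1 (n - 2), (z - exp (φ k u * I))) *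
      ((z - exp (φ n u * I)) * (z - exp (↑(-φ n u) * I))) := fun u hu z => by
    rw [hP, prod_Icc_one_eq_prod_Icc_sub_two_mul _ hn, hconj u hu]
  have hpara' : ∀ u ∈ Set.Ioo a b, IsParaorthogonal n N (γ · u) (ω · u) (P · u) := hpara
  have hA : ∀ j ≤ N, 2 * Real.cos (ω j t) - 2 * Real.cos (φ n t) ≠ 0 := fun j hj =>
    two_cos_sub_two_cos_ne_zero (hsep t ht j hj n (by simp; omega))
      (by rw [← hconj t ht]; exact hsep t ht j hj (n - 1) (by simp; omega))
  have hkey := mul_sum_eq_sum_sq_mul_chordProd_mul_WTilde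
    (fun j hj => (hγdiff j (hJ j hj) t ht).hasDerivAt)
    (fun j hj => (hωdiff j (hJ j hj) t ht).hasDerivAt)
    (fun k hk => (hφdiff k (hsub hk) t ht).hasDerivAt) (hφdiff n (by simp; omega) t ht).hasDerivAt
    (eventually_of_mem (Ioo_mem_nhds ht.1 ht.2) fun u hu =>
      (hpara' u hu).sum_mul_chordProd_eq_zero (hfactor u hu) hcard)
    (fun m hm => (hpara' t ht).sum_mul_chordProd_erase_mul_sin_eq_zero (hfactor t ht) hcard hm)
    (fun j hj => hA j (hJ j hj))
    (fun j hj m hm => cos_sub_ne_one_of_exp_mul_I_ne (hsep t ht j (hJ j hj) m (hsub hm)))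
  have hW : ∀ j, WTilde (Icc 1 (n - 2)) (φ · t) (φ n t) (ω j t) (γ j t)
      (deriv (γ j) t) (deriv (ω j) t) = W' j t := fun j => by
    rw [hW', hs', hS']
    rfl
  simp only [hW] at hkey
  exact pos_of_mul_eq_sum_sq_mul_mul (hrange t ht) (fun j hj => hγpos j (hJ j hj) t ht)
    (fun j hj => hA j (hJ j hj))
    (fun j hj => chordProd_pos fun k hk => hsep t ht j (hJ j hj) k (hsub hk))
    (fun j hj => hWnonneg j (hJ j hj))
    (let ⟨j, hj, hWj⟩ := hWpos; ⟨j, mem_range_succ_iff.mpr hj, hWj⟩) hkey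

/-- Theorem (discrete measure, conjugate pair, monotonicity): under the discrete
paraorthogonality setup with a conjugate pair of zeros `e^{±iφ_n(t)}`, if at some
`t ∈ I` one has `W̃_j(t) ≥ 0` for all `j` and `W̃_j(t) > 0` for some `j`, then
`φ_n'(t) > 0`, i.e. the zero `ζ(t) = e^{iφ_n(t)}` moves strictly counterclockwise
along the unit circle as `t` increases. -/
theorem discrete_popuc_conjugate_pair_zero_moves_counterclockwise
    -- the open interval `I = (a, b)`
    (a b : ℝ) (hab : a < b)
    -- the masses `γ_j` and mass points `ω_j`, `j = 0, …, N`
    (N : ℕ) (γ ω : ℕ → ℝ → ℝ)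
    (hγpos : ∀ j ≤ N, ∀ t ∈ Set.Ioo a b, 0 < γ j t)
    (hγdiff : ∀ j ≤ N, ∀ t ∈ Set.Ioo a b, DifferentiableAt ℝ (γ j) t)
    (hωdiff : ∀ j ≤ N, ∀ t ∈ Set.Ioo a b, DifferentiableAt ℝ (ω j) t)
    -- the zeros `e^{iφ_k(t)}`, `k = 1, …, n`, of the POPUC `P(·; t)`, with the
    -- conjugate pair `e^{±iφ_n(t)}`
    (n : ℕ) (hn : 2 ≤ n) (φ : ℕ → ℝ → ℝ)
    (hφdiff : ∀ k ∈ Finset.Icc 1 n, ∀ t ∈ Set.Ioo a b, DifferentiableAt ℝ (φ k) t)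
    (hconj : ∀ t ∈ Set.Ioo a b, φ (n - 1) t = -φ n t)
    (hrange : ∀ t ∈ Set.Ioo a b, φ n t ∈ Set.Ioo 0 Real.pi)
    (P : ℂ → ℝ → ℂ)
    (hP : ∀ z t, P z t = ∏ k ∈ Finset.Icc 1 n, (z - Complex.exp (φ k t * Complex.I)))
    (hdistinct : ∀ t ∈ Set.Ioo a b, ∀ j ∈ Finset.Icc 1 n, ∀ k ∈ Finset.Icc 1 n, j ≠ k →
      Complex.exp (φ j t * Complex.I) ≠ Complex.exp (φ k t * Complex.I))
    (hsep : ∀ t ∈ Set.Ioo a b, ∀ j ≤ N, ∀ k ∈ Finset.Icc 1 n,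
      Complex.exp (ω j t * Complex.I) ≠ Complex.exp (φ k t * Complex.I))
    -- paraorthogonality with respect to the measure `Σ_j γ_j(t) δ(θ − ω_j(t))`
    (hpara : ∀ t ∈ Set.Ioo a b, ∀ g : Polynomial ℂ,
      g.natDegree ≤ n - 1 → g.eval 0 = 0 →
      ∑ j ∈ Finset.range (N + 1), (γ j t : ℂ) *
        P (Complex.exp (ω j t * Complex.I)) t *
        (starRingEnd ℂ) (g.eval (Complex.exp (ω j t * Complex.I))) = 0)
    -- the functions `s̃`, `S̃` and `W̃_j`
    (s' : ℝ → ℝ → ℝ)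
    (hs' : ∀ θ t, s' θ t = 1 / (2 * (Real.cos (φ n t) - Real.cos θ)))
    (S' : ℝ → ℝ → ℝ)
    (hS' : ∀ θ t, S' θ t = Real.sin θ / (Real.cos θ - Real.cos (φ n t)) +
      ∑ k ∈ Finset.Icc 1 (n - 2), Real.cot ((φ k t - θ) / 2))
    (W' : ℕ → ℝ → ℝ)
    (hW' : ∀ j t, W' j t = s' (ω j t) t * deriv (γ j) t -
      γ j t * s' (ω j t) t * S' (ω j t) t * deriv (ω j) t)
    -- hypotheses on the sign of the `W̃_j` at a given `t`
    (t : ℝ) (ht : t ∈ Set.Ioo a b)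
    (hWnonneg : ∀ j ≤ N, 0 ≤ W' j t)
    (hWpos : ∃ j ≤ N, 0 < W' j t)
    -- conclusion
    : 0 < deriv (φ n) t :=
  discrete_popuc_conjugate_pair_zero_moves_counterclockwise_general a b N γ ω hγpos hγdiff hωdiff n
    hn φ hφdiff hconj hrange P hP hsep hpara s' hs' S' hS' W' hW' t ht hWnonneg hWpos
end

section
/- (Remark, part 1.) Under the stated time-independent-weight mixed paraorthogonality setup with fixed zero e^{iθ₀}, assume in addition that n > N+1, that P(e^{iω_j(t)};t) = 0 for every j = 0,…,N and every t ∈ I (every mass point is a zero of P), and that e^{iω_j(t)} ≠ e^{iφ_n(t)} for all j and t. Then φ_n′(t) = 0 for all t ∈ I; that is, the zero ζ(t) = e^{iφ_n(t)} does not move as t increases on I. -/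
/-!
Because every mass point is a zero of `P(·; t)`, the point masses drop out of the
paraorthogonality relations, so `P(·; t)` is a monic paraorthogonal polynomial for the fixed
weight `w dμ` alone with the fixed zero `u = e^{iθ₀}`. Such a polynomial is unique: the difference
`R = (z - u) S` of two of them is orthogonal to `g = z S`, and on the unit circle
`Re ((z - u) S(z) conj (z S(z))) = |R(z)|² / 2`; hence `R` vanishes `w dμ`-a.e., i.e. at
infinitely many points of the circle, so `R = 0`. Thus `P(·; t)` does not depend on `t`, and the
continuous zero `e^{iφ_n(t)}` takes values in its finite zero set, so it is constant.
-/

open Polynomial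

lemma IsPreconnected.eq_of_forall_isRoot {α R : Type*} [TopologicalSpace α] [CommRing R]
    [IsDomain R] [TopologicalSpace R] [T1Space R] {S : Set α} (hS : IsPreconnected S)
    {q : R[X]} (hq : q ≠ 0) {f : α → R} (hf : ContinuousOn f S)
    (hroot : ∀ r ∈ S, q.IsRoot (f r)) {x y : α} (hx : x ∈ S) (hy : y ∈ S) : f x = f y :=
  hS.constant_of_mapsTo (finite_setOfPred_isRoot hq).isDiscrete hf hroot hx hy

section CircleInner

open Complex MeasureTheory Set ComplexConjugate

noncomputable def circleInner (μ : Measure ℝ) (w : ℝ → ℝ) (s : Set ℝ) (p g : ℂ[X]) : ℂ :=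
  ∫ θ in s, p.eval (exp (θ * I)) * conj (g.eval (exp (θ * I))) * w θ ∂μ

variable {μ : Measure ℝ} {w : ℝ → ℝ} {s : Set ℝ}

lemma integrableOn_eval_mul_conj_eval_mul (hw : IntegrableOn w s μ) (p g : ℂ[X]) :
    IntegrableOn (fun θ : ℝ => p.eval (exp (θ * I)) * conj (g.eval (exp (θ * I))) * w θ) s μ := by
  have hF : Continuous fun z : ℂ => p.eval z * conj (g.eval z) := by fun_prop
  obtain ⟨C, hC⟩ := (isCompact_sphere (0 : ℂ) 1).exists_bound_of_continuousOn hF.continuousOn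
  refine hw.ofReal.bdd_mul (c := C) (hF.comp (by fun_prop)).aestronglyMeasurable
    (ae_of_all _ fun θ => hC _ ?_)
  simp

lemma circleInner_sub_left (hw : IntegrableOn w s μ) (p q g : ℂ[X]) :
    circleInner μ w s (p - q) g = circleInner μ w s p g - circleInner μ w s q g := by
  rw [circleInner, circleInner, circleInner, ← integral_sub
    (integrableOn_eval_mul_conj_eval_mul hw p g) (integrableOn_eval_mul_conj_eval_mul hw q g)]
  congr 1
  funext θ
  rw [eval_sub]
  ring

lemma re_sub_mul_mul_conj_mul {z u : ℂ} (hz : ‖z‖ = 1) (hu : ‖u‖ = 1) (a : ℂ) :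
    ((z - u) * a * conj (z * a)).re = ‖(z - u) * a‖ ^ 2 / 2 := by
  have hz' : z.re * z.re + z.im * z.im = 1 := by
    rw [← normSq_apply, normSq_eq_norm_sq, hz, one_pow]
  have hu' : u.re * u.re + u.im * u.im = 1 := by
    rw [← normSq_apply, normSq_eq_norm_sq, hu, one_pow]
  rw [← normSq_eq_norm_sq]
  simp only [normSq_apply, mul_re, mul_im, sub_re, sub_im, conj_re, conj_im]
  linear_combination (a.re * a.re + a.im * a.im) / 2 * (hz' - hu')

lemma eq_zero_of_ae_restrict_eval_exp_mul_I_eq_zero (hinj : InjOn (fun θ : ℝ => exp (θ * I)) s)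
    (hsupp : ∀ F : Finset ℝ, μ (s \ F) ≠ 0) {R : ℂ[X]}
    (h : ∀ᵐ θ : ℝ ∂μ.restrict s, R.eval (exp (θ * I)) = 0) : R = 0 := by
  by_contra hR
  have hfin : (s ∩ {θ | R.eval (exp (θ * I)) = 0}).Finite :=
    ((finite_setOfPred_isRoot hR).subset (by rintro _ ⟨θ, ⟨-, hθ⟩, rfl⟩; exact hθ)).of_finite_image
      (hinj.mono inter_subset_left)
  refine hsupp hfin.toFinset (measure_mono_null ?_ ((Measure.le_restrict_apply _ _).trans
    (ae_iff.mp h).le |> nonpos_iff_eq_zero.mp))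
  rintro θ ⟨hθs, hθF⟩
  exact ⟨fun h0 => hθF (by simpa using And.intro hθs h0), hθs⟩

lemma X_sub_C_mul_eq_zero_of_circleInner_eq_zero (hs : MeasurableSet s)
    (hinj : InjOn (fun θ : ℝ => exp (θ * I)) s) (hsupp : ∀ F : Finset ℝ, μ (s \ F) ≠ 0)
    (hwpos : ∀ θ ∈ s, 0 < w θ) (hw : IntegrableOn w s μ) {u : ℂ} (hu : ‖u‖ = 1) {S : ℂ[X]}
    (h : circleInner μ w s ((X - C u) * S) (X * S) = 0) : (X - C u) * S = 0 := by
  set R := (X - C u) * S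
  set f : ℝ → ℂ := fun θ => R.eval (exp (θ * I)) * conj ((X * S).eval (exp (θ * I))) * w θ
  have hre : ∀ θ : ℝ, (f θ).re = ‖R.eval (exp (θ * I))‖ ^ 2 / 2 * w θ := by
    intro θ
    simp only [f, R, re_mul_ofReal, eval_mul, eval_sub, eval_X, eval_C]
    rw [re_sub_mul_mul_conj_mul (norm_exp_ofReal_mul_I θ) hu]
  have hint : IntegrableOn f s μ := integrableOn_eval_mul_conj_eval_mul hw R (X * S)
  have hzero : ∫ θ in s, (f θ).re ∂μ = 0 := by
    have hre_int := integral_re hint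
    simp only [RCLike.re_to_complex] at hre_int
    rw [hre_int]
    exact (congrArg re h).trans zero_re
  have hnonneg : 0 ≤ᵐ[μ.restrict s] fun θ => (f θ).re := by
    filter_upwards [ae_restrict_mem hs] with θ hθ
    rw [Pi.zero_apply, hre]
    have := hwpos θ hθ
    positivity
  refine eq_zero_of_ae_restrict_eval_exp_mul_I_eq_zero hinj hsupp ?_
  filter_upwards [(integral_eq_zero_iff_of_nonneg_ae hnonneg hint.re).mp hzero,
    ae_restrict_mem hs] with θ h0 hθ
  rw [Pi.zero_apply, hre] at h0
  simpa [(hwpos θ hθ).ne'] using h0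

theorem eq_of_isMonicOfDegree_of_circleInner_eq_zero (hs : MeasurableSet s)
    (hinj : InjOn (fun θ : ℝ => exp (θ * I)) s) (hsupp : ∀ F : Finset ℝ, μ (s \ F) ≠ 0)
    (hwpos : ∀ θ ∈ s, 0 < w θ) (hw : IntegrableOn w s μ) {n : ℕ} {u : ℂ} (hu : ‖u‖ = 1)
    {p q : ℂ[X]} (hp : IsMonicOfDegree p n) (hq : IsMonicOfDegree q n)
    (hpu : p.IsRoot u) (hqu : q.IsRoot u)
    (hpg : ∀ g : ℂ[X], g.natDegree ≤ n - 1 → g.eval 0 = 0 → circleInner μ w s p g = 0)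
    (hqg : ∀ g : ℂ[X], g.natDegree ≤ n - 1 → g.eval 0 = 0 → circleInner μ w s q g = 0) :
    p = q := by
  have hn : n ≠ 0 := by
    rintro rfl
    simp [isMonicOfDegree_zero_iff.mp hp] at hpu
  obtain ⟨S, hS⟩ : X - C u ∣ p - q := dvd_iff_isRoot.mpr (by simp [hpu.eq_zero, hqu.eq_zero])
  have hdeg : (X * S).natDegree ≤ n - 1 := by
    rcases eq_or_ne S 0 with rfl | hS0
    · simp
    have := hp.natDegree_sub_lt hn hq
    rw [hS, natDegree_mul (X_sub_C_ne_zero u) hS0, natDegree_X_sub_C] at this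
    rw [natDegree_X_mul hS0]
    omega
  rw [← sub_eq_zero, hS]
  refine X_sub_C_mul_eq_zero_of_circleInner_eq_zero hs hinj hsupp hwpos hw hu ?_
  rw [← hS, circleInner_sub_left hw, hpg _ hdeg (by simp), hqg _ hdeg (by simp), sub_zero]

lemma HasDerivAt.eq_zero_of_eventuallyEq_exp_mul_I {φ : ℝ → ℝ} {φ' t : ℝ}
    (hφ : HasDerivAt φ φ' t)
    (hconst : (fun r => Complex.exp (φ r * I)) =ᶠ[nhds t] fun _ => Complex.exp (φ t * I)) :
    φ' = 0 := by
  have h := ((hφ.ofReal_comp.mul_const I).cexp).unique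
    ((hasDerivAt_const t _).congr_of_eventuallyEq hconst)
  simpa [exp_ne_zero, I_ne_zero] using h

end CircleInner

theorem mixed_popuc_zero_fixed_when_mass_points_are_zeros_general
    -- the open interval `I = (a, b)`
    (a b : ℝ)
    -- the finite measure `μ` on `[θ₀, θ₀ + 2π)` with infinite support
    (θ₀ : ℝ) (μ : MeasureTheory.Measure ℝ)
    (hsupp : ∀ F : Finset ℝ, μ (Set.Ico θ₀ (θ₀ + 2 * Real.pi) \ ↑F) ≠ 0)
    -- the time-independent weight `w(θ)`: positive and `μ`-integrable
    (w : ℝ → ℝ)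
    (hwpos : ∀ θ ∈ Set.Ico θ₀ (θ₀ + 2 * Real.pi), 0 < w θ)
    (hwint : MeasureTheory.IntegrableOn w (Set.Ico θ₀ (θ₀ + 2 * Real.pi)) μ)
    -- the masses `γ_j` and mass points `ω_j ∈ (θ₀, θ₀ + 2π)`, `j = 0, …, N`
    (N : ℕ) (γ ω : ℕ → ℝ → ℝ)
    -- the zeros `e^{iφ_k(t)}`, `k = 1, …, n`, of the POPUC `P(·; t)`
    (n : ℕ) (hn : 2 ≤ n) (φ : ℕ → ℝ → ℝ)
    (hφdiff : ∀ k ∈ Finset.Icc 1 n, ∀ t ∈ Set.Ioo a b, DifferentiableAt ℝ (φ k) t)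
    (hfix : ∀ t ∈ Set.Ioo a b, φ (n - 1) t = θ₀)
    (P : ℂ → ℝ → ℂ)
    (hP : ∀ z t, P z t = ∏ k ∈ Finset.Icc 1 n, (z - Complex.exp (φ k t * Complex.I)))
    -- paraorthogonality with respect to `w(θ) dμ(θ) + Σ_j γ_j(t) δ(θ − ω_j(t))`
    (hpara : ∀ t ∈ Set.Ioo a b, ∀ g : Polynomial ℂ,
      g.natDegree ≤ n - 1 → g.eval 0 = 0 →
      (∫ θ in Set.Ico θ₀ (θ₀ + 2 * Real.pi),
          P (Complex.exp (θ * Complex.I)) t *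
            (starRingEnd ℂ) (g.eval (Complex.exp (θ * Complex.I))) *
            (w θ : ℂ) ∂μ) +
        ∑ j ∈ Finset.range (N + 1), (γ j t : ℂ) *
          P (Complex.exp (ω j t * Complex.I)) t *
          (starRingEnd ℂ) (g.eval (Complex.exp (ω j t * Complex.I))) = 0)
    -- additional hypotheses
    (hmass_zero : ∀ j ≤ N, ∀ t ∈ Set.Ioo a b,
      P (Complex.exp (ω j t * Complex.I)) t = 0)
    -- conclusion
    : ∀ t ∈ Set.Ioo a b, deriv (φ n) t = 0 := by
  intro t ht
  have hmem : ∀ {k}, 1 ≤ k → k ≤ n → k ∈ Finset.Icc 1 n := fun h1 h2 =>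
    Finset.mem_Icc.mpr ⟨h1, h2⟩
  set p : ℝ → ℂ[X] := fun r =>
    ∏ k ∈ Finset.Icc 1 n, (X - C (Complex.exp (φ k r * Complex.I))) with hp
  have hPp : ∀ z r, P z r = (p r).eval z := by simp [hP, hp, eval_prod]
  have hmonic : ∀ r, IsMonicOfDegree (p r) n := fun r =>
    ⟨by simp [hp], monic_prod_of_monic _ _ fun k _ => monic_X_sub_C _⟩
  have hroot : ∀ r, ∀ k ∈ Finset.Icc 1 n, (p r).IsRoot (Complex.exp (φ k r * Complex.I)) :=
    fun r k hk => (isRoot_prod _ _ _).mpr ⟨k, hk, root_X_sub_C.mpr rfl⟩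
  have hortho : ∀ r ∈ Set.Ioo a b, ∀ g : ℂ[X], g.natDegree ≤ n - 1 → g.eval 0 = 0 →
      circleInner μ w (Set.Ico θ₀ (θ₀ + 2 * Real.pi)) (p r) g = 0 := by
    intro r hr g hg hg0
    have hsum := hpara r hr g hg hg0
    rw [Finset.sum_eq_zero fun j hj => by
      rw [hmass_zero j (Nat.lt_succ_iff.mp (Finset.mem_range.mp hj)) r hr, mul_zero, zero_mul],
      add_zero] at hsum
    simpa only [circleInner, hPp] using hsum
  have hfixed : ∀ r ∈ Set.Ioo a b, (p r).IsRoot (Complex.exp (θ₀ * Complex.I)) := fun r hr =>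
    hfix r hr ▸ hroot r (n - 1) (hmem (by omega) (by omega))
  have hconst : ∀ r ∈ Set.Ioo a b, p r = p t := fun r hr =>
    eq_of_isMonicOfDegree_of_circleInner_eq_zero measurableSet_Ico
      (Subtype.val_injective.comp_injOn (Circle.exp_injOn_Ico (by linarith)))
      hsupp hwpos hwint (Complex.norm_exp_ofReal_mul_I θ₀) (hmonic r) (hmonic t)
      (hfixed r hr) (hfixed t ht) (hortho r hr) (hortho t ht)
  have hderiv := fun r hr => (hφdiff n (hmem (by omega) le_rfl) r hr).hasDerivAt
  have hζ : ∀ r ∈ Set.Ioo a b,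
      Complex.exp (φ n r * Complex.I) = Complex.exp (φ n t * Complex.I) := fun r hr =>
    isPreconnected_Ioo.eq_of_forall_isRoot (hmonic t).ne_zero
      (fun r hr => ((hderiv r hr).ofReal_comp.mul_const _).cexp.continuousAt.continuousWithinAt)
      (fun r hr => hconst r hr ▸ hroot r n (hmem (by omega) le_rfl)) hr ht
  exact (hderiv t ht).eq_zero_of_eventuallyEq_exp_mul_I
    (Filter.eventuallyEq_of_mem (isOpen_Ioo.mem_nhds ht) hζ)

/-- Remark (part 1): under the time-independent-weight mixed paraorthogonality setup
with fixed zero `e^{iθ₀}`, if `n > N + 1`, every mass point `e^{iω_j(t)}` is a zero of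
`P(·; t)`, and `e^{iω_j(t)} ≠ e^{iφ_n(t)}` for all `j` and `t`, then `φ_n'(t) = 0` for
all `t ∈ I`, i.e. the zero `ζ(t) = e^{iφ_n(t)}` does not move as `t` increases. -/
theorem mixed_popuc_zero_fixed_when_mass_points_are_zeros
    -- the open interval `I = (a, b)`
    (a b : ℝ) (hab : a < b)
    -- the finite measure `μ` on `[θ₀, θ₀ + 2π)` with infinite support
    (θ₀ : ℝ) (μ : MeasureTheory.Measure ℝ) [MeasureTheory.IsFiniteMeasure μ]
    (hsupp : ∀ F : Finset ℝ, μ (Set.Ico θ₀ (θ₀ + 2 * Real.pi) \ ↑F) ≠ 0)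
    -- the time-independent weight `w(θ)`: positive and `μ`-integrable
    (w : ℝ → ℝ)
    (hwpos : ∀ θ ∈ Set.Ico θ₀ (θ₀ + 2 * Real.pi), 0 < w θ)
    (hwint : MeasureTheory.IntegrableOn w (Set.Ico θ₀ (θ₀ + 2 * Real.pi)) μ)
    -- the masses `γ_j` and mass points `ω_j ∈ (θ₀, θ₀ + 2π)`, `j = 0, …, N`
    (N : ℕ) (γ ω : ℕ → ℝ → ℝ)
    (hγpos : ∀ j ≤ N, ∀ t ∈ Set.Ioo a b, 0 < γ j t)
    (hγdiff : ∀ j ≤ N, ∀ t ∈ Set.Ioo a b, DifferentiableAt ℝ (γ j) t)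
    (hωdiff : ∀ j ≤ N, ∀ t ∈ Set.Ioo a b, DifferentiableAt ℝ (ω j) t)
    (hωrange : ∀ j ≤ N, ∀ t ∈ Set.Ioo a b, ω j t ∈ Set.Ioo θ₀ (θ₀ + 2 * Real.pi))
    -- the zeros `e^{iφ_k(t)}`, `k = 1, …, n`, of the POPUC `P(·; t)`
    (n : ℕ) (hn : 2 ≤ n) (φ : ℕ → ℝ → ℝ)
    (hφdiff : ∀ k ∈ Finset.Icc 1 n, ∀ t ∈ Set.Ioo a b, DifferentiableAt ℝ (φ k) t)
    (hfix : ∀ t ∈ Set.Ioo a b, φ (n - 1) t = θ₀)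
    (hφnrange : ∀ t ∈ Set.Ioo a b, φ n t ∈ Set.Ioo θ₀ (θ₀ + 2 * Real.pi))
    (P : ℂ → ℝ → ℂ)
    (hP : ∀ z t, P z t = ∏ k ∈ Finset.Icc 1 n, (z - Complex.exp (φ k t * Complex.I)))
    (hdistinct : ∀ t ∈ Set.Ioo a b, ∀ j ∈ Finset.Icc 1 n, ∀ k ∈ Finset.Icc 1 n, j ≠ k →
      Complex.exp (φ j t * Complex.I) ≠ Complex.exp (φ k t * Complex.I))
    -- paraorthogonality with respect to `w(θ) dμ(θ) + Σ_j γ_j(t) δ(θ − ω_j(t))`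
    (hpara : ∀ t ∈ Set.Ioo a b, ∀ g : Polynomial ℂ,
      g.natDegree ≤ n - 1 → g.eval 0 = 0 →
      (∫ θ in Set.Ico θ₀ (θ₀ + 2 * Real.pi),
          P (Complex.exp (θ * Complex.I)) t *
            (starRingEnd ℂ) (g.eval (Complex.exp (θ * Complex.I))) *
            (w θ : ℂ) ∂μ) +
        ∑ j ∈ Finset.range (N + 1), (γ j t : ℂ) *
          P (Complex.exp (ω j t * Complex.I)) t *
          (starRingEnd ℂ) (g.eval (Complex.exp (ω j t * Complex.I))) = 0)
    -- additional hypotheses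
    (hnN : N + 1 < n)
    (hmass_zero : ∀ j ≤ N, ∀ t ∈ Set.Ioo a b,
      P (Complex.exp (ω j t * Complex.I)) t = 0)
    (hne : ∀ j ≤ N, ∀ t ∈ Set.Ioo a b,
      Complex.exp (ω j t * Complex.I) ≠ Complex.exp (φ n t * Complex.I))
    -- conclusion
    : ∀ t ∈ Set.Ioo a b, deriv (φ n) t = 0 :=
  mixed_popuc_zero_fixed_when_mass_points_are_zeros_general a b θ₀ μ hsupp w hwpos hwint N γ ω n hn
    φ hφdiff hfix P hP hpara hmass_zero
end

section
/- (Remark, part 2.) Under the stated time-independent-weight mixed paraorthogonality setup with fixed zero e^{iθ₀}, assume in addition that n ≥ N+1, that the mass points are fixed, i.e. ω_j′(t) = 0 for every j = 0,…,N and every t ∈ I, and that P(e^{iω_j(t)};t) = 0 for every j and every t. Then φ_n′(t) = 0 for all t ∈ I; that is, the zero ζ(t) = e^{iφ_n(t)} does not move as t increases on I. -/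
/-!
Once every mass point is a zero of `P(·; t)`, the point masses drop out of the paraorthogonality
relation and `P(·; t)` is orthogonal to `z · ℂ_{n-2}[z]` in `L²(w dμ)`. Two monic polynomials of
degree `n` with this property that vanish at `ζ₀ = e^{iθ₀}` differ by `(z - ζ₀) E(z)` with
`deg E ≤ n - 2`; pairing this difference with `z E(z)` gives a real part
`∫ (1 - cos (θ₀ - θ)) |E(e^{iθ})|² w(θ) dμ(θ)`, which is positive unless `E = 0` because `μ` has
infinite support. Hence `P(·; t)` does not depend on `t`, and the continuous function `φ_n` takes
values in its finite zero set, so it is locally constant.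
-/

open Polynomial MeasureTheory Set Real ComplexConjugate

lemma injOn_exp_ofReal_mul_I_Ico {a b : ℝ} (hab : b - a ≤ 2 * π) :
    InjOn (fun θ : ℝ => Complex.exp (θ * Complex.I)) (Ico a b) := by
  intro x hx y hy h
  exact Circle.exp_injOn_Ico hab hx hy (Subtype.ext (by simpa [Circle.coe_exp] using h))

lemma Polynomial.finite_setOf_eval_exp_ofReal_mul_I_eq_zero {p : ℂ[X]} (hp : p ≠ 0) (θ₀ : ℝ) :
    {θ ∈ Ico θ₀ (θ₀ + 2 * π) | p.eval (Complex.exp (θ * Complex.I)) = 0}.Finite := by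
  refine Set.Finite.of_finite_image ((p.finite_setOfPred_isRoot hp).subset ?_)
    ((injOn_exp_ofReal_mul_I_Ico (by linarith)).mono (sep_subset _ _))
  rintro _ ⟨θ, ⟨-, hθ⟩, rfl⟩
  exact hθ

lemma re_exp_ofReal_mul_I_sub_mul_conj (θ θ₀ : ℝ) :
    ((Complex.exp (θ * Complex.I) - Complex.exp (θ₀ * Complex.I)) *
      conj (Complex.exp (θ * Complex.I))).re = 1 - cos (θ₀ - θ) := by
  simp only [Complex.mul_re, Complex.sub_re, Complex.sub_im, Complex.conj_re, Complex.conj_im,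
    Complex.exp_ofReal_mul_I_re, Complex.exp_ofReal_mul_I_im, cos_sub]
  nlinarith [sin_sq_add_cos_sq θ]

lemma cos_sub_lt_one_of_mem_Ioo {θ θ₀ : ℝ} (hθ : θ ∈ Ioo θ₀ (θ₀ + 2 * π)) :
    cos (θ₀ - θ) < 1 := by
  refine (cos_le_one _).lt_of_ne fun h => ?_
  rw [cos_eq_one_iff_of_lt_of_lt (by linarith [hθ.2]) (by linarith [hθ.1, pi_pos])] at h
  linarith [hθ.1]

noncomputable def weightedCircleInner (μ : Measure ℝ) (w : ℝ → ℝ) (θ₀ : ℝ) (p q : ℂ[X]) : ℂ :=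
  ∫ θ in Ico θ₀ (θ₀ + 2 * π),
    p.eval (Complex.exp (θ * Complex.I)) * conj (q.eval (Complex.exp (θ * Complex.I))) * (w θ : ℂ)
    ∂μ

section weightedCircleInner

variable {μ : Measure ℝ} {w : ℝ → ℝ} {θ₀ : ℝ}

lemma integrableOn_weightedCircleInner_integrand
    (hw : IntegrableOn w (Ico θ₀ (θ₀ + 2 * π)) μ) (p q : ℂ[X]) :
    IntegrableOn (fun θ : ℝ => p.eval (Complex.exp (θ * Complex.I)) *
      conj (q.eval (Complex.exp (θ * Complex.I))) * (w θ : ℂ)) (Ico θ₀ (θ₀ + 2 * π)) μ := by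
  have hcont : Continuous fun θ : ℝ =>
      p.eval (Complex.exp (θ * Complex.I)) * conj (q.eval (Complex.exp (θ * Complex.I))) := by
    fun_prop
  exact IntegrableOn.continuousOn_mul_of_subset hcont.continuousOn hw.ofReal isCompact_Icc
    measurableSet_Ico Ico_subset_Icc_self

lemma weightedCircleInner_sub_left (hw : IntegrableOn w (Ico θ₀ (θ₀ + 2 * π)) μ) (p q r : ℂ[X]) :
    weightedCircleInner μ w θ₀ (p - q) r =
      weightedCircleInner μ w θ₀ p r - weightedCircleInner μ w θ₀ q r := by
  rw [weightedCircleInner, weightedCircleInner, weightedCircleInner,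
    ← integral_sub (integrableOn_weightedCircleInner_integrand hw p r)
      (integrableOn_weightedCircleInner_integrand hw q r)]
  congr 1 with θ
  rw [eval_sub]
  ring

lemma re_eval_X_sub_C_mul_mul_conj_eval_X_mul (E : ℂ[X]) (θ θ₀ r : ℝ) :
    (((X - C (Complex.exp (θ₀ * Complex.I))) * E).eval (Complex.exp (θ * Complex.I)) *
      conj ((X * E).eval (Complex.exp (θ * Complex.I))) * (r : ℂ)).re =
      (1 - cos (θ₀ - θ)) * (Complex.normSq (E.eval (Complex.exp (θ * Complex.I))) * r) := by
  set ζ := Complex.exp (θ * Complex.I)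
  set ζ₀ := Complex.exp (θ₀ * Complex.I)
  have hsplit : ((X - C ζ₀) * E).eval ζ * conj ((X * E).eval ζ) * (r : ℂ) =
      (ζ - ζ₀) * conj ζ * ((Complex.normSq (E.eval ζ) * r : ℝ) : ℂ) := by
    simp only [eval_mul, eval_sub, eval_X, eval_C, map_mul, Complex.ofReal_mul,
      ← Complex.mul_conj]
    ring
  rw [hsplit, Complex.re_mul_ofReal, re_exp_ofReal_mul_I_sub_mul_conj]

lemma zero_lt_re_weightedCircleInner_X_sub_C_mul
    (hsupp : ∀ F : Finset ℝ, μ (Ico θ₀ (θ₀ + 2 * π) \ ↑F) ≠ 0)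
    (hwpos : ∀ θ ∈ Ico θ₀ (θ₀ + 2 * π), 0 < w θ) (hw : IntegrableOn w (Ico θ₀ (θ₀ + 2 * π)) μ)
    {E : ℂ[X]} (hE : E ≠ 0) :
    0 < (weightedCircleInner μ w θ₀ ((X - C (Complex.exp (θ₀ * Complex.I))) * E) (X * E)).re := by
  set f : ℝ → ℝ := fun θ =>
    (1 - cos (θ₀ - θ)) * (Complex.normSq (E.eval (Complex.exp (θ * Complex.I))) * w θ)
  have hintegrand := integrableOn_weightedCircleInner_integrand hw
    ((X - C (Complex.exp (θ₀ * Complex.I))) * E) (X * E)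
  have hre : (weightedCircleInner μ w θ₀ ((X - C (Complex.exp (θ₀ * Complex.I))) * E) (X * E)).re =
      ∫ θ in Ico θ₀ (θ₀ + 2 * π), f θ ∂μ := by
    have h := integral_re hintegrand
    simp only [RCLike.re_to_complex, re_eval_X_sub_C_mul_mul_conj_eval_X_mul] at h
    exact h.symm
  have hf : IntegrableOn f (Ico θ₀ (θ₀ + 2 * π)) μ := by
    have h := hintegrand.re
    simp only [RCLike.re_to_complex, re_eval_X_sub_C_mul_mul_conj_eval_X_mul] at h
    exact h
  have hf_nonneg : 0 ≤ᵐ[μ.restrict (Ico θ₀ (θ₀ + 2 * π))] f :=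
    ae_restrict_of_forall_mem measurableSet_Ico fun θ hθ =>
      mul_nonneg (sub_nonneg.2 (cos_le_one _))
        (mul_nonneg (Complex.normSq_nonneg _) (hwpos θ hθ).le)
  rw [hre, setIntegral_pos_iff_support_of_nonneg_ae hf_nonneg hf, pos_iff_ne_zero]
  have hzeros := E.finite_setOf_eval_exp_ofReal_mul_I_eq_zero hE θ₀
  refine fun h => hsupp (insert θ₀ hzeros.toFinset) (measure_mono_null ?_ h)
  rintro θ ⟨hθ, hθF⟩
  simp only [Finset.coe_insert, Set.Finite.coe_toFinset, mem_insert_iff, mem_sep_iff, not_or] at hθF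
  have hcos := cos_sub_lt_one_of_mem_Ioo ⟨hθ.1.lt_of_ne' hθF.1, hθ.2⟩
  have hEθ : E.eval (Complex.exp (θ * Complex.I)) ≠ 0 := fun h => hθF.2 ⟨hθ, h⟩
  exact ⟨(mul_pos (sub_pos.2 hcos) (mul_pos (Complex.normSq_pos.2 hEθ) (hwpos θ hθ))).ne', hθ⟩

lemma eq_of_isMonicOfDegree_of_eval_eq_zero_of_orthogonal
    (hsupp : ∀ F : Finset ℝ, μ (Ico θ₀ (θ₀ + 2 * π) \ ↑F) ≠ 0)
    (hwpos : ∀ θ ∈ Ico θ₀ (θ₀ + 2 * π), 0 < w θ) (hw : IntegrableOn w (Ico θ₀ (θ₀ + 2 * π)) μ)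
    {n : ℕ} {Q₁ Q₂ : ℂ[X]} (h₁ : IsMonicOfDegree Q₁ n) (h₂ : IsMonicOfDegree Q₂ n)
    (hroot₁ : Q₁.eval (Complex.exp (θ₀ * Complex.I)) = 0)
    (hroot₂ : Q₂.eval (Complex.exp (θ₀ * Complex.I)) = 0)
    (horth₁ : ∀ g : ℂ[X], g.natDegree ≤ n - 1 → g.eval 0 = 0 →
      weightedCircleInner μ w θ₀ Q₁ g = 0)
    (horth₂ : ∀ g : ℂ[X], g.natDegree ≤ n - 1 → g.eval 0 = 0 →
      weightedCircleInner μ w θ₀ Q₂ g = 0) :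
    Q₁ = Q₂ := by
  have hn : n ≠ 0 := by
    rintro rfl
    simp [isMonicOfDegree_zero_iff.1 h₁] at hroot₁
  obtain ⟨E, hE⟩ : X - C (Complex.exp (θ₀ * Complex.I)) ∣ Q₁ - Q₂ :=
    dvd_iff_isRoot.2 (by simp [hroot₁, hroot₂])
  by_contra hne
  have hE0 : E ≠ 0 := by
    rintro rfl
    exact hne (sub_eq_zero.1 (by simpa using hE))
  have hdeg : (X * E).natDegree ≤ n - 1 := by
    have := h₁.natDegree_sub_lt hn h₂
    rw [hE, natDegree_mul (X_sub_C_ne_zero _) hE0, natDegree_X_sub_C] at this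
    rw [natDegree_mul X_ne_zero hE0, natDegree_X]
    omega
  have hpos := zero_lt_re_weightedCircleInner_X_sub_C_mul hsupp hwpos hw hE0
  rw [← hE, weightedCircleInner_sub_left hw, horth₁ _ hdeg (by simp), horth₂ _ hdeg (by simp),
    sub_zero, Complex.zero_re] at hpos
  exact hpos.false

end weightedCircleInner

lemma deriv_eq_zero_of_mapsTo_finite {f : ℝ → ℝ} {s T : Set ℝ} (hs : IsOpen s)
    (hs_conn : IsPreconnected s) (hf : ContinuousOn f s) (hT : T.Finite) (hfT : MapsTo f s T) {t : ℝ}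
    (ht : t ∈ s) : deriv f t = 0 := by
  have hconst : f =ᶠ[nhds t] fun _ => f t := by
    filter_upwards [hs.mem_nhds ht] with x hx using
      hs_conn.constant_of_mapsTo hT.isDiscrete hf hfT hx ht
  rw [hconst.deriv_eq, deriv_const]

theorem mixed_popuc_zero_fixed_when_fixed_mass_points_are_zeros_general
    -- the open interval `I = (a, b)`
    (a b : ℝ)
    -- the finite measure `μ` on `[θ₀, θ₀ + 2π)` with infinite support
    (θ₀ : ℝ) (μ : MeasureTheory.Measure ℝ)
    (hsupp : ∀ F : Finset ℝ, μ (Set.Ico θ₀ (θ₀ + 2 * Real.pi) \ ↑F) ≠ 0)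
    -- the time-independent weight `w(θ)`: positive and `μ`-integrable
    (w : ℝ → ℝ)
    (hwpos : ∀ θ ∈ Set.Ico θ₀ (θ₀ + 2 * Real.pi), 0 < w θ)
    (hwint : MeasureTheory.IntegrableOn w (Set.Ico θ₀ (θ₀ + 2 * Real.pi)) μ)
    -- the masses `γ_j` and mass points `ω_j ∈ (θ₀, θ₀ + 2π)`, `j = 0, …, N`
    (N : ℕ) (γ ω : ℕ → ℝ → ℝ)
    -- the zeros `e^{iφ_k(t)}`, `k = 1, …, n`, of the POPUC `P(·; t)`
    (n : ℕ) (hn : 2 ≤ n) (φ : ℕ → ℝ → ℝ)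
    (hφdiff : ∀ k ∈ Finset.Icc 1 n, ∀ t ∈ Set.Ioo a b, DifferentiableAt ℝ (φ k) t)
    (hfix : ∀ t ∈ Set.Ioo a b, φ (n - 1) t = θ₀)
    (hφnrange : ∀ t ∈ Set.Ioo a b, φ n t ∈ Set.Ioo θ₀ (θ₀ + 2 * Real.pi))
    (P : ℂ → ℝ → ℂ)
    (hP : ∀ z t, P z t = ∏ k ∈ Finset.Icc 1 n, (z - Complex.exp (φ k t * Complex.I)))
    -- paraorthogonality with respect to `w(θ) dμ(θ) + Σ_j γ_j(t) δ(θ − ω_j(t))`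
    (hpara : ∀ t ∈ Set.Ioo a b, ∀ g : Polynomial ℂ,
      g.natDegree ≤ n - 1 → g.eval 0 = 0 →
      (∫ θ in Set.Ico θ₀ (θ₀ + 2 * Real.pi),
          P (Complex.exp (θ * Complex.I)) t *
            (starRingEnd ℂ) (g.eval (Complex.exp (θ * Complex.I))) *
            (w θ : ℂ) ∂μ) +
        ∑ j ∈ Finset.range (N + 1), (γ j t : ℂ) *
          P (Complex.exp (ω j t * Complex.I)) t *
          (starRingEnd ℂ) (g.eval (Complex.exp (ω j t * Complex.I))) = 0)
    -- additional hypotheses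
    (hmass_zero : ∀ j ≤ N, ∀ t ∈ Set.Ioo a b,
      P (Complex.exp (ω j t * Complex.I)) t = 0)
    -- conclusion
    : ∀ t ∈ Set.Ioo a b, deriv (φ n) t = 0 := by
  set Q : ℝ → ℂ[X] := fun s => ∏ k ∈ Finset.Icc 1 n, (X - C (Complex.exp (φ k s * Complex.I)))
  have hPQ : ∀ z s, P z s = (Q s).eval z := fun z s => by simp [hP, Q, eval_prod]
  have hQ_monic : ∀ s, IsMonicOfDegree (Q s) n := fun s => ⟨by simp [Q], monic_prod_X_sub_C _ _⟩
  have hQ_root : ∀ s, ∀ k ∈ Finset.Icc 1 n, (Q s).eval (Complex.exp (φ k s * Complex.I)) = 0 :=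
    fun s k hk => by simpa [Q, eval_prod] using Finset.prod_eq_zero hk (sub_self _)
  have hQ_root₀ : ∀ s ∈ Ioo a b, (Q s).eval (Complex.exp (θ₀ * Complex.I)) = 0 := fun s hs =>
    hfix s hs ▸ hQ_root s (n - 1) (Finset.mem_Icc.2 ⟨by omega, by omega⟩)
  have hQ_orth : ∀ s ∈ Ioo a b, ∀ g : ℂ[X], g.natDegree ≤ n - 1 → g.eval 0 = 0 →
      weightedCircleInner μ w θ₀ (Q s) g = 0 := by
    intro s hs g hg hg0
    have h := hpara s hs g hg hg0
    rw [Finset.sum_eq_zero fun j hj => by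
      rw [hmass_zero j (Finset.mem_range_succ_iff.1 hj) s hs, mul_zero, zero_mul], add_zero] at h
    simp only [hPQ] at h
    exact h
  have hQ_const : ∀ s ∈ Ioo a b, ∀ t ∈ Ioo a b, Q s = Q t := fun s hs t ht =>
    eq_of_isMonicOfDegree_of_eval_eq_zero_of_orthogonal hsupp hwpos hwint (hQ_monic s)
      (hQ_monic t) (hQ_root₀ s hs) (hQ_root₀ t ht) (hQ_orth s hs) (hQ_orth t ht)
  have hn_mem : n ∈ Finset.Icc 1 n := Finset.mem_Icc.2 ⟨by omega, le_rfl⟩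
  intro t ht
  refine deriv_eq_zero_of_mapsTo_finite isOpen_Ioo isPreconnected_Ioo
    (fun s hs => (hφdiff n hn_mem s hs).continuousAt.continuousWithinAt)
    ((Q t).finite_setOf_eval_exp_ofReal_mul_I_eq_zero (hQ_monic t).ne_zero θ₀)
    (fun s hs => ⟨Ioo_subset_Ico_self (hφnrange s hs), ?_⟩) ht
  rw [← hQ_const s hs t ht]
  exact hQ_root s n hn_mem

/-- Remark (part 2): under the time-independent-weight mixed paraorthogonality setup
with fixed zero `e^{iθ₀}`, if `n ≥ N + 1`, the mass points are fixed
(`ω_j'(t) = 0` for all `j` and `t`), and every mass point `e^{iω_j(t)}` is a zero of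
`P(·; t)`, then `φ_n'(t) = 0` for all `t ∈ I`, i.e. the zero `ζ(t) = e^{iφ_n(t)}`
does not move as `t` increases. -/
theorem mixed_popuc_zero_fixed_when_fixed_mass_points_are_zeros
    -- the open interval `I = (a, b)`
    (a b : ℝ) (hab : a < b)
    -- the finite measure `μ` on `[θ₀, θ₀ + 2π)` with infinite support
    (θ₀ : ℝ) (μ : MeasureTheory.Measure ℝ) [MeasureTheory.IsFiniteMeasure μ]
    (hsupp : ∀ F : Finset ℝ, μ (Set.Ico θ₀ (θ₀ + 2 * Real.pi) \ ↑F) ≠ 0)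
    -- the time-independent weight `w(θ)`: positive and `μ`-integrable
    (w : ℝ → ℝ)
    (hwpos : ∀ θ ∈ Set.Ico θ₀ (θ₀ + 2 * Real.pi), 0 < w θ)
    (hwint : MeasureTheory.IntegrableOn w (Set.Ico θ₀ (θ₀ + 2 * Real.pi)) μ)
    -- the masses `γ_j` and mass points `ω_j ∈ (θ₀, θ₀ + 2π)`, `j = 0, …, N`
    (N : ℕ) (γ ω : ℕ → ℝ → ℝ)
    (hγpos : ∀ j ≤ N, ∀ t ∈ Set.Ioo a b, 0 < γ j t)
    (hγdiff : ∀ j ≤ N, ∀ t ∈ Set.Ioo a b, DifferentiableAt ℝ (γ j) t)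
    (hωdiff : ∀ j ≤ N, ∀ t ∈ Set.Ioo a b, DifferentiableAt ℝ (ω j) t)
    (hωrange : ∀ j ≤ N, ∀ t ∈ Set.Ioo a b, ω j t ∈ Set.Ioo θ₀ (θ₀ + 2 * Real.pi))
    -- the zeros `e^{iφ_k(t)}`, `k = 1, …, n`, of the POPUC `P(·; t)`
    (n : ℕ) (hn : 2 ≤ n) (φ : ℕ → ℝ → ℝ)
    (hφdiff : ∀ k ∈ Finset.Icc 1 n, ∀ t ∈ Set.Ioo a b, DifferentiableAt ℝ (φ k) t)
    (hfix : ∀ t ∈ Set.Ioo a b, φ (n - 1) t = θ₀)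
    (hφnrange : ∀ t ∈ Set.Ioo a b, φ n t ∈ Set.Ioo θ₀ (θ₀ + 2 * Real.pi))
    (P : ℂ → ℝ → ℂ)
    (hP : ∀ z t, P z t = ∏ k ∈ Finset.Icc 1 n, (z - Complex.exp (φ k t * Complex.I)))
    (hdistinct : ∀ t ∈ Set.Ioo a b, ∀ j ∈ Finset.Icc 1 n, ∀ k ∈ Finset.Icc 1 n, j ≠ k →
      Complex.exp (φ j t * Complex.I) ≠ Complex.exp (φ k t * Complex.I))
    -- paraorthogonality with respect to `w(θ) dμ(θ) + Σ_j γ_j(t) δ(θ − ω_j(t))`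
    (hpara : ∀ t ∈ Set.Ioo a b, ∀ g : Polynomial ℂ,
      g.natDegree ≤ n - 1 → g.eval 0 = 0 →
      (∫ θ in Set.Ico θ₀ (θ₀ + 2 * Real.pi),
          P (Complex.exp (θ * Complex.I)) t *
            (starRingEnd ℂ) (g.eval (Complex.exp (θ * Complex.I))) *
            (w θ : ℂ) ∂μ) +
        ∑ j ∈ Finset.range (N + 1), (γ j t : ℂ) *
          P (Complex.exp (ω j t * Complex.I)) t *
          (starRingEnd ℂ) (g.eval (Complex.exp (ω j t * Complex.I))) = 0)
    -- additional hypotheses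
    (hnN : N + 1 ≤ n)
    (hωfixed : ∀ j ≤ N, ∀ t ∈ Set.Ioo a b, deriv (ω j) t = 0)
    (hmass_zero : ∀ j ≤ N, ∀ t ∈ Set.Ioo a b,
      P (Complex.exp (ω j t * Complex.I)) t = 0)
    -- conclusion
    : ∀ t ∈ Set.Ioo a b, deriv (φ n) t = 0 :=
  mixed_popuc_zero_fixed_when_fixed_mass_points_are_zeros_general a b θ₀ μ hsupp w hwpos hwint N γ ω
    n hn φ hφdiff hfix hφnrange P hP hpara hmass_zero
end
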